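/- arXiv:2303.04514 — 10 statements merged into one kernel-verified Lean document; each statement's English description precedes it below -/
import Mathlib

section
/- Let f ∈ ℂ[z] be a polynomial such that f^{(2k)}(0) = 0 and f^{(2k)}(1) = 0 for every integer k ≥ 0, where f^{(2k)} denotes the (2k)-th derivative of f. Then f = 0. -/
/-!
Second derivatives preserve the hypotheses and, over a torsion-free coefficient ring, lower the
degree by two, so by strong induction on the degree `f'' = 0`. Then `f` is affine, and an affine
polynomial vanishing at `0` and `1` is zero.
-/

open Polynomial

namespace Polynomial

variable {R : Type*} [Semiring R]

theorem eq_zero_of_natDegree_le_one_of_eval_zero_of_eval_one {f : R[X]} (hf : f.natDegree ≤ 1)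
    (h0 : f.eval 0 = 0) (h1 : f.eval 1 = 0) : f = 0 := by
  obtain ⟨a, b, rfl⟩ := exists_eq_X_add_C_of_natDegree_le_one hf
  simp_all

theorem eq_zero_of_iterate_derivative_two_mul_eval_zero_of_eval_one [IsAddTorsionFree R]
    {f : R[X]} (h0 : ∀ k : ℕ, (derivative^[2 * k] f).eval 0 = 0)
    (h1 : ∀ k : ℕ, (derivative^[2 * k] f).eval 1 = 0) : f = 0 := by
  induction hn : f.natDegree using Nat.strong_induction_on generalizing f with
  | _ n ih =>
    by_cases hf : f.natDegree ≤ 1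
    · exact eq_zero_of_natDegree_le_one_of_eval_zero_of_eval_one hf (h0 0) (h1 0)
    have hlt : (derivative (derivative f)).natDegree < n := by
      simp only [natDegree_derivative]
      omega
    -- `derivative^[2 * (k + 1)] f` unfolds to `derivative^[2 * k] (derivative (derivative f))`
    have hf'' : derivative (derivative f) = 0 :=
      ih _ hlt (fun k => h0 (k + 1)) (fun k => h1 (k + 1)) rfl
    have : f.natDegree - 1 = 0 := by
      rw [← natDegree_derivative, ← derivative_eq_zero, hf'']
    omega

end Polynomial

/-- **Lemma 1 (Lidstone, one variable).** If a polynomial `f ∈ ℂ[z]` satisfies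
`f^{(2k)}(0) = 0` and `f^{(2k)}(1) = 0` for every integer `k ≥ 0`, then `f = 0`. -/
theorem lidstone_unicity_polynomial (f : Polynomial ℂ)
    (h0 : ∀ k : ℕ, (Polynomial.derivative^[2 * k] f).eval 0 = 0)
    (h1 : ∀ k : ℕ, (Polynomial.derivative^[2 * k] f).eval 1 = 0) :
    f = 0 :=
  eq_zero_of_iterate_derivative_two_mul_eval_zero_of_eval_one h0 h1
end

section
/- There exist two sequences of polynomials (Λ_{2k,0})_{k≥0} and (Λ_{2k,1})_{k≥0} in ℂ[z] such that every polynomial f ∈ ℂ[z] satisfies f(z) = Σ_{k≥0} f^{(2k)}(0)·Λ_{2k,0}(z) + Σ_{k≥0} f^{(2k)}(1)·Λ_{2k,1}(z) for all z ∈ ℂ, where both sums are finite because f^{(2k)} = 0 whenever 2k exceeds the degree of f. -/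
/-!
A polynomial is determined by its second derivative and its values at `0` and `1`. Choose
`Λ_{k+1}` with `Λ_{k+1}'' = Λ_k` vanishing at `0` and `1`, starting from `1 - z` and `z`. If `f''`
has the expansion (induction on the degree), shifting every `Λ_k` in it to `Λ_{k+1}` and adding
`f(0)·(1 - z) + f(1)·z` gives a polynomial with second derivative `f''` and values `f(0)`, `f(1)`,
hence equal to `f`.
-/

open Finset

namespace Polynomial

section Lidstone

variable {K : Type*} [Field K] [CharZero K]

theorem derivative_surjective : Function.Surjective (derivative : K[X] → K[X]) := by
  intro p
  induction p using Polynomial.induction_on' with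
  | add p q hp hq =>
    obtain ⟨P, rfl⟩ := hp
    obtain ⟨Q, rfl⟩ := hq
    exact ⟨P + Q, derivative_add⟩
  | monomial n a =>
    refine ⟨monomial (n + 1) (a / (n + 1)), ?_⟩
    rw [derivative_monomial]
    push_cast
    rw [div_mul_cancel₀ _ (Nat.cast_add_one_ne_zero n)]

theorem eq_of_derivative_derivative_eq {p q : K[X]}
    (h : derivative (derivative p) = derivative (derivative q))
    (h0 : p.eval 0 = q.eval 0) (h1 : p.eval 1 = q.eval 1) : p = q := by
  rw [← sub_eq_zero] at h h0 h1 ⊢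
  rw [← derivative_sub, ← derivative_sub] at h
  rw [← eval_sub] at h0 h1
  generalize p - q = p at h h0 h1 ⊢
  have hdeg : p.natDegree ≤ 1 := by
    have := derivative_eq_zero.1 h
    rw [natDegree_derivative] at this
    omega
  rw [eq_X_add_C_of_natDegree_le_one hdeg] at h0 h1 ⊢
  simp only [eval_add, eval_mul, eval_C, eval_X, mul_zero, zero_add, mul_one] at h0 h1
  rw [h0, add_zero] at h1
  simp [h0, h1]

theorem exists_derivative_derivative_eq_of_eval_zero_of_eval_one (p : K[X]) :
    ∃ q : K[X], derivative (derivative q) = p ∧ q.eval 0 = 0 ∧ q.eval 1 = 0 := by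
  obtain ⟨q', rfl⟩ := derivative_surjective p
  obtain ⟨q, rfl⟩ := derivative_surjective q'
  refine ⟨q - (C (q.eval 0) * (1 - X) + C (q.eval 1) * X), ?_, ?_, ?_⟩ <;> simp

/-- The iterates `lidstoneStep^[k] X` and `lidstoneStep^[k] (1 - X)` are the Lidstone polynomials
`Λ_{2k,1}` and `Λ_{2k,0}`. -/
noncomputable def lidstoneStep (p : K[X]) : K[X] :=
  (exists_derivative_derivative_eq_of_eval_zero_of_eval_one p).choose

@[simp]
theorem derivative_derivative_lidstoneStep (p : K[X]) :
    derivative (derivative (lidstoneStep p)) = p :=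
  (exists_derivative_derivative_eq_of_eval_zero_of_eval_one p).choose_spec.1

@[simp]
theorem eval_zero_lidstoneStep (p : K[X]) : (lidstoneStep p).eval 0 = 0 :=
  (exists_derivative_derivative_eq_of_eval_zero_of_eval_one p).choose_spec.2.1

@[simp]
theorem eval_one_lidstoneStep (p : K[X]) : (lidstoneStep p).eval 1 = 0 :=
  (exists_derivative_derivative_eq_of_eval_zero_of_eval_one p).choose_spec.2.2

theorem eq_sum_lidstoneStep_iterate {n : ℕ} {f : K[X]} (hf : derivative^[2 * n] f = 0) :
    f = ∑ k ∈ range n,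
      (C ((derivative^[2 * k] f).eval 0) * lidstoneStep^[k] (1 - X) +
        C ((derivative^[2 * k] f).eval 1) * lidstoneStep^[k] X) := by
  induction n generalizing f with
  | zero => simpa using hf
  | succ n ih =>
    have hf'' : derivative^[2 * n] (derivative (derivative f)) = 0 := by
      rwa [mul_add_one, Function.iterate_add_apply] at hf
    rw [sum_range_succ']
    simp only [Function.iterate_succ_apply' lidstoneStep]
    simp only [mul_add_one, Function.iterate_succ_apply, mul_zero, Function.iterate_zero, id_eq]
    apply eq_of_derivative_derivative_eq
    · simp only [derivative_add, derivative_sum, derivative_mul, derivative_C, zero_mul, zero_add,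
        derivative_derivative_lidstoneStep]
      simpa using ih hf''
    · simp [eval_finsetSum]
    · simp [eval_finsetSum]

end Lidstone

theorem support_eval_iterate_derivative_mul_subset {R : Type*} [Semiring R]
    (f : R[X]) (a : R) (c : ℕ → R) :
    Function.support (fun k => (derivative^[2 * k] f).eval a * c k) ⊆ range (f.natDegree + 1) := by
  intro k hk
  by_contra hk'
  rw [coe_range, Set.mem_Iio, not_lt] at hk'
  exact hk (by dsimp only; rw [iterate_derivative_eq_zero (by omega), eval_zero, zero_mul])

end Polynomial

open Polynomial

/-- **Theorem (Lidstone, 1930).** There exist two sequences of polynomials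
`(Λ_{2k,0})_{k≥0}` and `(Λ_{2k,1})_{k≥0}` in `ℂ[z]` such that every polynomial `f`
has the (finite) expansion
`f(z) = Σ_k f^{(2k)}(0)·Λ_{2k,0}(z) + Σ_k f^{(2k)}(1)·Λ_{2k,1}(z)`.
The sums are finite since `f^{(2k)} = 0` for `2k > deg f`; we express them with `∑ᶠ`. -/
theorem lidstone_expansion_polynomial :
    ∃ Λ₀ Λ₁ : ℕ → Polynomial ℂ,
      ∀ f : Polynomial ℂ, ∀ z : ℂ,
        f.eval z =
          (∑ᶠ k : ℕ, (Polynomial.derivative^[2 * k] f).eval 0 * (Λ₀ k).eval z) +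
          (∑ᶠ k : ℕ, (Polynomial.derivative^[2 * k] f).eval 1 * (Λ₁ k).eval z) := by
  refine ⟨fun k => lidstoneStep^[k] (1 - X), fun k => lidstoneStep^[k] X, fun f z => ?_⟩
  have hf : derivative^[2 * (f.natDegree + 1)] f = 0 := iterate_derivative_eq_zero (by omega)
  rw [finsum_eq_finsetSum_of_support_subset _ (support_eval_iterate_derivative_mul_subset f 0 _),
    finsum_eq_finsetSum_of_support_subset _ (support_eval_iterate_derivative_mul_subset f 1 _),
    ← sum_add_distrib]
  conv_lhs => rw [eq_sum_lidstoneStep_iterate hf]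
  simp [eval_finsetSum]
end

section
/- For each integer k ≥ 0 there exists a unique polynomial Λ ∈ ℂ[z] such that Λ^{(2j)}(0) = 0 for every integer j ≥ 0 and Λ^{(2j)}(1) = δ_{jk} (Kronecker delta) for every integer j ≥ 0. -/
/-!
Both boundary conditions are preserved by `Λ ↦ Λ''` with the index `k` shifted down by one.
Hence `Λ_0 = X`, and `Λ_{k+1}` is the double antiderivative of `Λ_k` vanishing at `0` and `1`.
For uniqueness, the difference `D` of two solutions has all even derivatives vanishing at
`0` and `1`; so does `D''`, which has smaller degree, hence `D'' = 0` by induction and `D` is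
a polynomial of degree at most one with the two roots `0` and `1`.
-/

open Polynomial

namespace Polynomial

theorem iterate_derivative_two_mul_succ {R : Type*} [Semiring R] (p : R[X]) (j : ℕ) :
    derivative^[2 * (j + 1)] p = derivative^[2 * j] (derivative (derivative p)) := by
  rw [mul_add, mul_one, Function.iterate_add_apply]
  rfl

theorem exists_derivative_eq {K : Type*} [Field K] [CharZero K] (p : K[X]) :
    ∃ q : K[X], derivative q = p := by
  induction p using Polynomial.induction_on' with
  | add f g hf hg =>
    obtain ⟨qf, rfl⟩ := hf
    obtain ⟨qg, rfl⟩ := hg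
    exact ⟨qf + qg, derivative_add⟩
  | monomial n a =>
    refine ⟨C (a / (n + 1)) * X ^ (n + 1), ?_⟩
    rw [derivative_C_mul_X_pow, Nat.add_sub_cancel, Nat.cast_add_one,
      div_mul_cancel₀ a (Nat.cast_add_one_ne_zero n), C_mul_X_pow_eq_monomial]

theorem exists_eval_zero_eval_one_derivative_derivative_eq {K : Type*} [Field K] [CharZero K]
    (p : K[X]) :
    ∃ q : K[X], q.eval 0 = 0 ∧ q.eval 1 = 0 ∧ derivative (derivative q) = p := by
  obtain ⟨q₁, rfl⟩ := exists_derivative_eq p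
  obtain ⟨q, rfl⟩ := exists_derivative_eq q₁
  -- subtracting the linear interpolant of `q` at `0` and `1` does not change `q''`
  refine ⟨q - C (q.eval 0) - C (q.eval 1 - q.eval 0) * X, ?_, ?_, ?_⟩ <;> simp

theorem eq_zero_of_natDegree_le_one_of_eval_zero_of_eval_one_s2 {R : Type*} [CommRing R]
    [IsDomain R] {p : R[X]} (hp : p.natDegree ≤ 1) (h0 : p.eval 0 = 0) (h1 : p.eval 1 = 0) :
    p = 0 := by
  classical
  exact eq_zero_of_natDegree_lt_card_of_eval_eq_zero' p {0, 1} (by simp [h0, h1]) (by simp; omega)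

theorem eq_zero_of_iterate_derivative_two_mul_eval_zero_of_eval_one_s2 {R : Type*} [CommRing R]
    [IsDomain R] [CharZero R] (p : R[X])
    (h0 : ∀ j : ℕ, (derivative^[2 * j] p).eval 0 = 0)
    (h1 : ∀ j : ℕ, (derivative^[2 * j] p).eval 1 = 0) : p = 0 := by
  induction hn : p.natDegree using Nat.strong_induction_on generalizing p with
  | _ n ih =>
    refine eq_zero_of_natDegree_le_one_of_eval_zero_of_eval_one_s2 ?_ (h0 0) (h1 0)
    by_contra! hp
    have hdd : derivative (derivative p) = 0 := by
      refine ih _ ?_ _ (fun j ↦ ?_) (fun j ↦ ?_) rfl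
      · simp only [natDegree_derivative]
        omega
      · rw [← iterate_derivative_two_mul_succ]
        exact h0 (j + 1)
      · rw [← iterate_derivative_two_mul_succ]
        exact h1 (j + 1)
    simp only [derivative_eq_zero, natDegree_derivative] at hdd
    omega

theorem exists_iterate_derivative_two_mul_eval_zero_eval_one_eq_ite {K : Type*} [Field K]
    [CharZero K] (k : ℕ) :
    ∃ Λ : K[X], (∀ j : ℕ, (derivative^[2 * j] Λ).eval 0 = 0) ∧
      (∀ j : ℕ, (derivative^[2 * j] Λ).eval 1 = if j = k then 1 else 0) := by
  induction k with
  | zero =>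
    refine ⟨X, fun j ↦ ?_, fun j ↦ ?_⟩ <;> cases j <;>
      simp [iterate_derivative_two_mul_succ]
  | succ k ih =>
    obtain ⟨Λ, hΛ0, hΛ1⟩ := ih
    obtain ⟨q, hq0, hq1, rfl⟩ := exists_eval_zero_eval_one_derivative_derivative_eq Λ
    refine ⟨q, fun j ↦ ?_, fun j ↦ ?_⟩ <;> cases j
    · simpa using hq0
    · rw [iterate_derivative_two_mul_succ, hΛ0]
    · simpa using hq1
    · simp [iterate_derivative_two_mul_succ, hΛ1]

end Polynomial

/-- For each `k ≥ 0` there is a unique polynomial `Λ ∈ ℂ[z]` with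
`Λ^{(2j)}(0) = 0` and `Λ^{(2j)}(1) = δ_{jk}` for all `j ≥ 0`. -/
theorem lidstone_polynomial_exists_unique (k : ℕ) :
    ∃! Λ : Polynomial ℂ,
      (∀ j : ℕ, (Polynomial.derivative^[2 * j] Λ).eval 0 = 0) ∧
      (∀ j : ℕ, (Polynomial.derivative^[2 * j] Λ).eval 1 = if j = k then 1 else 0) := by
  obtain ⟨Λ, h0, h1⟩ := exists_iterate_derivative_two_mul_eval_zero_eval_one_eq_ite (K := ℂ) k
  refine ⟨Λ, ⟨h0, h1⟩, fun Λ' ⟨h0', h1'⟩ ↦ sub_eq_zero.mp ?_⟩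
  apply eq_zero_of_iterate_derivative_two_mul_eval_zero_of_eval_one_s2 <;>
    simp [h0, h1, h0', h1']
end

section
/- For every integer k ≥ 0 and every z ∈ ℂ, z^{2k}/(2k)! = Λ_{2k,0}(z) + Σ_{j=0}^{k} Λ_{2j,1}(z)/(2k − 2j)!. -/
/-!
A polynomial all of whose even derivatives vanish at `0` and `1` is zero: its second derivative
has the same property and lower degree, so by induction it is affine, and an affine polynomial
vanishing at `0` and `1` is zero. Hence a polynomial `p` of degree `< 2N` is its own Lidstone
interpolant `∑_{j<N} p⁽²ʲ⁾(1) Λ_{2j,1} + p⁽²ʲ⁾(0) Λ_{2j,0}`. For `p = z^{2k}/(2k)!` one has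
`p⁽²ʲ⁾(1) = 1/(2k-2j)!` and `p⁽²ʲ⁾(0) = δ_{jk}`.
-/

open Polynomial Finset
open scoped Nat

section Lidstone

variable {R : Type*} [CommRing R]

theorem eq_zero_of_eval_iterate_derivative_two_mul_eq_zero [IsAddTorsionFree R] {q : R[X]}
    (h0 : ∀ j, (derivative^[2 * j] q).eval 0 = 0) (h1 : ∀ j, (derivative^[2 * j] q).eval 1 = 0) :
    q = 0 := by
  induction hn : q.natDegree using Nat.strong_induction_on generalizing q with
  | _ n ih =>
    have shift (j : ℕ) : derivative^[2 * j] (derivative^[2] q) = derivative^[2 * (j + 1)] q := by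
      rw [← Function.iterate_add_apply, mul_add, mul_one]
    have hq₂ : derivative^[2] q = 0 := by
      by_cases hdeg : q.natDegree < 2
      · exact iterate_derivative_eq_zero hdeg
      · refine ih _ ?_ (fun j => by rw [shift]; exact h0 _) (fun j => by rw [shift]; exact h1 _) rfl
        have := natDegree_iterate_derivative q 2
        omega
    have hdeg : q.natDegree ≤ 1 := by
      simp only [Function.iterate_succ_apply, Function.iterate_zero_apply, derivative_eq_zero,
        natDegree_derivative] at hq₂
      omega
    obtain ⟨a, b, rfl⟩ := exists_eq_X_add_C_of_natDegree_le_one hdeg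
    have hb : b = 0 := by simpa using h0 0
    have ha : a = 0 := by simpa [hb] using h1 0
    simp [ha, hb]

theorem eval_iterate_derivative_two_mul_lidstone_sum (Λ : ℕ → R[X]) (a b : ℕ → R)
    (N i : ℕ) (x : R) :
    (derivative^[2 * i] (∑ j ∈ range N, (C (a j) * Λ j + C (b j) * (Λ j).comp (1 - X)))).eval x =
      ∑ j ∈ range N, (a j * (derivative^[2 * i] (Λ j)).eval x +
        b j * (derivative^[2 * i] (Λ j)).eval (1 - x)) := by
  simp [iterate_derivative_sum, iterate_derivative_C_mul, eval_finsetSum, pow_mul]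

theorem eq_lidstone_sum_of_natDegree_lt [IsAddTorsionFree R] {Λ : ℕ → R[X]}
    (hΛ0 : ∀ k j : ℕ, (derivative^[2 * j] (Λ k)).eval 0 = 0)
    (hΛ1 : ∀ k j : ℕ, (derivative^[2 * j] (Λ k)).eval 1 = if j = k then 1 else 0)
    {p : R[X]} {N : ℕ} (hN : p.natDegree < 2 * N) :
    p = ∑ j ∈ range N, (C ((derivative^[2 * j] p).eval 1) * Λ j +
      C ((derivative^[2 * j] p).eval 0) * (Λ j).comp (1 - X)) := by
  have vanish (i : ℕ) (hi : i ∉ range N) : derivative^[2 * i] p = 0 :=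
    iterate_derivative_eq_zero (by simp at hi; omega)
  refine sub_eq_zero.mp (eq_zero_of_eval_iterate_derivative_two_mul_eq_zero ?_ ?_) <;>
  · intro i
    rw [iterate_derivative_sub, eval_sub, eval_iterate_derivative_two_mul_lidstone_sum, sub_eq_zero]
    by_cases hi : i ∈ range N <;> simp [hΛ0, hΛ1, hi, vanish]

end Lidstone

theorem iterate_derivative_C_inv_factorial_mul_X_pow {K : Type*} [Field K] [CharZero K]
    {n i : ℕ} (h : i ≤ n) :
    derivative^[i] (C ((n ! : K)⁻¹) * X ^ n) = C (((n - i)! : K)⁻¹) * X ^ (n - i) := by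
  rw [iterate_derivative_C_mul, iterate_derivative_X_pow_eq_C_mul, ← mul_assoc, ← C_mul]
  congr 2
  rw [← Nat.factorial_mul_descFactorial h, Nat.cast_mul]
  have : (n.descFactorial i : K) ≠ 0 := by
    exact_mod_cast (Nat.descFactorial_pos.mpr h).ne'
  field_simp

/-- For every `k ≥ 0` and `z ∈ ℂ`,
`z^{2k}/(2k)! = Λ_{2k,0}(z) + Σ_{j=0}^{k} Λ_{2j,1}(z)/(2k−2j)!`,
where `Λ_{2k,1}` are the Lidstone polynomials and `Λ_{2k,0}(z) = Λ_{2k,1}(1 − z)`. -/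
theorem lidstone_polynomial_power_expansion (Λ : ℕ → Polynomial ℂ)
    (hΛ0 : ∀ k j : ℕ, (Polynomial.derivative^[2 * j] (Λ k)).eval 0 = 0)
    (hΛ1 : ∀ k j : ℕ,
      (Polynomial.derivative^[2 * j] (Λ k)).eval 1 = if j = k then 1 else 0) :
    ∀ k : ℕ, ∀ z : ℂ,
      z ^ (2 * k) / (Nat.factorial (2 * k) : ℂ) =
        (Λ k).eval (1 - z) +
          ∑ j ∈ Finset.range (k + 1), (Λ j).eval z / (Nat.factorial (2 * k - 2 * j) : ℂ) := by
  intro k z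
  set p : ℂ[X] := C ((2 * k)! : ℂ)⁻¹ * X ^ (2 * k) with hp
  have hdeg : p.natDegree < 2 * (k + 1) := (natDegree_C_mul_X_pow_le _ _).trans_lt (by omega)
  have hcoeff (j : ℕ) (hj : j ∈ range (k + 1)) :
      C ((derivative^[2 * j] p).eval 1) * Λ j +
          C ((derivative^[2 * j] p).eval 0) * (Λ j).comp (1 - X) =
        C ((2 * k - 2 * j)! : ℂ)⁻¹ * Λ j + if j = k then (Λ j).comp (1 - X) else 0 := by
    rw [hp, iterate_derivative_C_inv_factorial_mul_X_pow (by simp at hj; omega)]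
    rcases eq_or_ne j k with rfl | hjk
    · simp
    · simp [hjk, show 2 * k - 2 * j ≠ 0 by simp at hj; omega]
  have hexp := congrArg (eval z) (eq_lidstone_sum_of_natDegree_lt hΛ0 hΛ1 hdeg)
  rw [sum_congr rfl hcoeff, sum_add_distrib, sum_ite_eq'] at hexp
  simpa [hp, eval_finsetSum, div_eq_inv_mul, add_comm] using hexp
end

section
/- Let f: ℂ → ℂ be an entire function of exponential type < π. Suppose there exists an integer N such that the iterated derivatives satisfy f^{(2k)}(0) = 0 and f^{(2k)}(1) = 0 for every integer k ≥ N. Then f is a polynomial, i.e., there exists P ∈ ℂ[z] with f(z) = P(z) for all z ∈ ℂ. -/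
/-!
Replacing `f` by `g = f^{(2N)}`, which is still of exponential type `< π` by Cauchy's estimates,
all even derivatives of `g` vanish at `0` and at `1`. By Taylor's formula `g` is then odd about
`0` and about `1`, hence `2`-periodic and zero at every integer. So `g(z) / sin (π z)` is entire and
`2`-periodic, and on the strip `0 ≤ Re z ≤ 2` it is `O(e^{(τ - π)|Im z|})` since `|sin (π z)|`
grows like `e^{π |Im z|}`. It is therefore bounded, constant by Liouville, and zero since it
decays. Thus `g = 0`, and `f` equals its Taylor polynomial of degree `< 2N`.
-/

open Real Function Filter Topology Metric Set
open scoped Nat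

theorem norm_iteratedDeriv_le_of_norm_le_exp {F : Type*} [NormedAddCommGroup F]
    [NormedSpace ℂ F] [CompleteSpace F] {f : ℂ → F} (hf : Differentiable ℂ f) {C τ : ℝ}
    (hτ : 0 ≤ τ) (hb : ∀ z, ‖f z‖ ≤ C * exp (τ * ‖z‖)) (n : ℕ) (z : ℂ) :
    ‖iteratedDeriv n f z‖ ≤ n ! * (C * exp τ) * exp (τ * ‖z‖) := by
  have hC : 0 ≤ C := by simpa using (norm_nonneg _).trans (hb 0)
  have hsphere : ∀ w ∈ sphere z 1, ‖f w‖ ≤ C * exp τ * exp (τ * ‖z‖) := fun w hw ↦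
    calc ‖f w‖ ≤ C * exp (τ * ‖w‖) := hb w
      _ ≤ C * exp (τ * (‖z‖ + 1)) := by
        gcongr
        simpa [mem_sphere_iff_norm.mp hw] using norm_le_norm_add_norm_sub' w z
      _ = C * exp τ * exp (τ * ‖z‖) := by rw [mul_add, mul_one, exp_add]; ring
  simpa [mul_assoc] using
    Complex.norm_iteratedDeriv_le_of_forall_mem_sphere_norm_le n one_pos hf.diffContOnCl hsphere

theorem iteratedDeriv_iteratedDeriv {𝕜 F : Type*} [NontriviallyNormedField 𝕜]
    [NormedAddCommGroup F] [NormedSpace 𝕜 F] (m n : ℕ) (f : 𝕜 → F) :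
    iteratedDeriv m (iteratedDeriv n f) = iteratedDeriv (m + n) f := by
  simp only [iteratedDeriv_eq_iterate, iterate_add_apply]

theorem exists_polynomial_eq_of_iteratedDeriv_eq_zero {f : ℂ → ℂ} (hf : Differentiable ℂ f)
    {n : ℕ} (hn : iteratedDeriv n f = 0) : ∃ P : Polynomial ℂ, ∀ z, f z = P.eval z := by
  have hvanish : ∀ m, n ≤ m → iteratedDeriv m f 0 = 0 := fun m hm ↦ by
    rw [← Nat.sub_add_cancel hm, ← iteratedDeriv_iteratedDeriv, hn, Pi.zero_def,
      iteratedDeriv_fun_const_zero]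
  refine ⟨∑ m ∈ Finset.range n,
    Polynomial.C ((m ! : ℂ)⁻¹ * iteratedDeriv m f 0) * Polynomial.X ^ m, fun z ↦ ?_⟩
  rw [← Complex.taylorSeries_eq_of_entire' 0 z hf, tsum_eq_sum (s := Finset.range n)]
  · simp [Polynomial.eval_finsetSum]
  · intro m hm
    simp [hvanish m (by simpa using hm)]

theorem add_eq_zero_of_iteratedDeriv_two_mul_eq_zero {g : ℂ → ℂ} (hg : Differentiable ℂ g)
    {c : ℂ} (hc : ∀ k : ℕ, iteratedDeriv (2 * k) g c = 0) (z : ℂ) :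
    g (c + z) + g (c - z) = 0 := by
  have hsum := (Complex.hasSum_taylorSeries_of_entire hg c (c + z)).add
    (Complex.hasSum_taylorSeries_of_entire hg c (c - z))
  refine hsum.unique ?_
  convert hasSum_zero with m
  rcases Nat.even_or_odd m with ⟨k, rfl⟩ | hodd
  · simp [← two_mul, hc k]
  · simp [hodd.neg_pow]

theorem periodic_of_forall_add_add_sub_eq_zero {G H : Type*} [AddCommGroup G] [AddCommGroup H]
    {g : G → H} {a b : G} (ha : ∀ z, g (a + z) + g (a - z) = 0)
    (hb : ∀ z, g (b + z) + g (b - z) = 0) : Periodic g (2 • (b - a)) := fun z ↦ by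
  have h₁ := hb (z + b - 2 • a)
  have h₂ := ha (a - z)
  rw [show b + (z + b - 2 • a) = z + 2 • (b - a) by abel,
    show b - (z + b - 2 • a) = a + (a - z) by abel] at h₁
  rw [show a - (a - z) = z by abel] at h₂
  rw [eq_neg_of_add_eq_zero_left h₁, eq_neg_of_add_eq_zero_left h₂, neg_neg]

theorem intCast_eq_zero_of_periodic_two {H : Type*} [Zero H] {g : ℂ → H} (hg : Periodic g 2)
    (h₀ : g 0 = 0) (h₁ : g 1 = 0) (n : ℤ) : g n = 0 := by
  rcases Int.even_or_odd' n with ⟨m, rfl | rfl⟩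
  · simpa [mul_comm, h₀] using hg.int_mul_eq m
  · simpa [mul_comm, h₁, add_comm] using hg.int_mul m 1

section RemovableDiv

variable {g s : ℂ → ℂ}

/-- The l'Hôpital value at the zeros of `s` makes this the holomorphic extension of `g / s` when
`g` vanishes at the zeros of `s` and these are simple. -/
noncomputable def removableDiv (g s : ℂ → ℂ) (z : ℂ) : ℂ :=
  if s z = 0 then deriv g z / deriv s z else g z / s z

theorem removableDiv_mul_self (hgs : ∀ z, s z = 0 → g z = 0) (z : ℂ) :
    removableDiv g s z * s z = g z := by
  by_cases hz : s z = 0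
  · simp [hz, hgs z hz]
  · simp [removableDiv, hz]

theorem differentiable_removableDiv (hg : Differentiable ℂ g) (hs : Differentiable ℂ s)
    (hgs : ∀ z, s z = 0 → g z = 0) (hs' : ∀ z, s z = 0 → deriv s z ≠ 0) :
    Differentiable ℂ (removableDiv g s) := by
  intro c
  by_cases hc : s c = 0
  · have hslope : ∀ {f : ℂ → ℂ}, Differentiable ℂ f → DifferentiableAt ℂ (dslope f c) c :=
      fun hf ↦ ((Complex.differentiableOn_dslope univ_mem).mpr hf.differentiableOn).differentiableAt
        univ_mem
    have hden : dslope s c c ≠ 0 := by rw [dslope_same]; exact hs' c hc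
    refine ((hslope hg).div (hslope hs) hden).congr_of_eventuallyEq ?_
    have hne : ∀ᶠ z in 𝓝[≠] c, s z ≠ 0 := (hs c).hasDerivAt.eventually_ne (hs' c hc)
    filter_upwards [eventually_nhdsWithin_iff.mp hne] with z hz
    rcases eq_or_ne z c with rfl | hzc
    · simp [removableDiv, hc]
    · rw [Pi.div_apply, dslope_of_ne _ hzc, dslope_of_ne _ hzc, slope_def_field, slope_def_field,
        div_div_div_cancel_right₀ (sub_ne_zero.mpr hzc), hc, hgs c hc, sub_zero, sub_zero,
        removableDiv, if_neg (hz hzc)]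
  · refine ((hg c).div (hs c) hc).congr_of_eventuallyEq ?_
    filter_upwards [(hs c).continuousAt.eventually_ne hc] with z hz
    simp [removableDiv, hz]

theorem Function.Periodic.removableDiv {p : ℂ} (hg : Periodic g p) (hs : Periodic s p) :
    Periodic (removableDiv g s) p := by
  have hderiv : ∀ {f : ℂ → ℂ}, Periodic f p → Periodic (deriv f) p := fun {f} hf z ↦ by
    rw [← deriv_comp_add_const, show (fun x ↦ f (x + p)) = f from funext hf]
  intro z
  simp only [_root_.removableDiv, hg z, hs z, hderiv hg z, hderiv hs z]

end RemovableDiv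

namespace Complex

theorem exp_abs_im_div_four_le_norm_sin {w : ℂ} (hw : 1 ≤ |w.im|) :
    Real.exp |w.im| / 4 ≤ ‖sin w‖ := by
  have hsinh : 2 * Real.sinh |w.im| ≤ 2 * ‖sin w‖ := by
    have h := abs_norm_sub_norm_le (exp (-w * I)) (exp (w * I))
    have e : ‖exp (-w * I) - exp (w * I)‖ = 2 * ‖sin w‖ := by
      rw [sin, norm_div, norm_mul, norm_I]; norm_num; ring
    have habs : |Real.exp w.im - Real.exp (-w.im)| = 2 * Real.sinh |w.im| := by
      rw [← Real.abs_sinh, Real.sinh_eq, abs_div, abs_two]; ring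
    rwa [norm_exp, norm_exp, e, show (-w * I).re = w.im by simp,
      show (w * I).re = -w.im by simp, habs] at h
  have h2 : 2 ≤ Real.exp |w.im| := by linarith [Real.add_one_le_exp |w.im|]
  have h3 : Real.exp (-|w.im|) ≤ 1 := Real.exp_le_one_iff.mpr (by linarith)
  rw [Real.sinh_eq] at hsinh
  linarith

theorem hasDerivAt_sin_pi_mul (z : ℂ) :
    HasDerivAt (fun w : ℂ ↦ sin (π * w)) (π * cos (π * z)) z := by
  simpa [mul_comm] using ((hasDerivAt_id z).const_mul (π : ℂ)).csin

theorem exists_intCast_eq_of_sin_pi_mul_eq_zero {z : ℂ} (hz : sin (π * z) = 0) :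
    ∃ n : ℤ, z = n := by
  obtain ⟨n, hn⟩ := sin_eq_zero_iff.mp hz
  exact ⟨n, mul_left_cancel₀ (ofReal_ne_zero.mpr pi_ne_zero) (by rw [hn, mul_comm])⟩

theorem cos_ne_zero_of_sin_eq_zero {w : ℂ} (hw : sin w = 0) : cos w ≠ 0 := fun hc ↦ by
  simpa [hw, hc] using sin_sq_add_cos_sq w

end Complex

theorem Function.Periodic.exists_re_mem_Icc {α : Type*} {h : ℂ → α} {p : ℝ} (hp : 0 < p)
    (hper : Periodic h p) (z : ℂ) : ∃ w : ℂ, w.re ∈ Icc 0 p ∧ w.im = z.im ∧ h w = h z := by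
  refine ⟨z - ⌊z.re / p⌋ • (p : ℂ), ?_, by simp, hper.sub_zsmul_eq _⟩
  have hre : (z - ⌊z.re / p⌋ • (p : ℂ)).re = z.re - ⌊z.re / p⌋ * p := by simp
  have h₁ := Int.floor_le (z.re / p)
  have h₂ := Int.lt_floor_add_one (z.re / p)
  rw [le_div_iff₀ hp] at h₁
  rw [div_lt_iff₀ hp] at h₂
  rw [hre]
  constructor <;> nlinarith

theorem eq_zero_of_periodic_of_norm_le_exp_neg {h : ℂ → ℂ} (hh : Differentiable ℂ h) {p : ℝ}
    (hp : 0 < p) (hper : Periodic h p) {M δ : ℝ} (hδ : 0 < δ)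
    (hdecay : ∀ z : ℂ, z.re ∈ Icc 0 p → 1 ≤ |z.im| → ‖h z‖ ≤ M * exp (-δ * |z.im|)) :
    h = 0 := by
  obtain ⟨M₁, hM₁⟩ := ((isCompact_Icc (a := 0) (b := p)).reProdIm
    (isCompact_Icc (a := -1) (b := 1))).exists_bound_of_continuousOn hh.continuous.continuousOn
  have hbdd : Bornology.IsBounded (range h) := by
    refine isBounded_iff_forall_norm_le.mpr ⟨max M₁ |M|, ?_⟩
    rintro _ ⟨z, rfl⟩
    obtain ⟨w, hre, -, hw⟩ := hper.exists_re_mem_Icc hp z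
    rw [← hw]
    rcases le_or_gt |w.im| 1 with him | him
    · exact (hM₁ w ⟨hre, abs_le.mp him⟩).trans (le_max_left _ _)
    · have hexp : exp (-δ * |w.im|) ≤ 1 := exp_le_one_iff.mpr (by nlinarith [abs_nonneg w.im])
      calc ‖h w‖ ≤ M * exp (-δ * |w.im|) := hdecay w hre him.le
        _ ≤ |M| * 1 := mul_le_mul (le_abs_self M) hexp (exp_pos _).le (abs_nonneg M)
        _ ≤ max M₁ |M| := by simp
  have hconst : ∀ z, h z = h 0 := fun z ↦ hh.apply_eq_apply_of_bounded hbdd z 0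
  have hlim : Tendsto (fun t : ℝ ↦ M * exp (-δ * t)) atTop (𝓝 0) := by
    simpa using (tendsto_exp_atBot.comp
      ((tendsto_const_mul_atBot_of_neg (neg_neg_of_pos hδ)).mpr tendsto_id)).const_mul M
  have h0 : ‖h 0‖ ≤ 0 := ge_of_tendsto hlim <| eventually_atTop.mpr ⟨1, fun t ht ↦ by
    simpa [hconst, abs_of_pos (by linarith : 0 < t)] using
      hdecay (t * Complex.I) (by simp [hp.le]) (by simpa [abs_of_pos (by linarith : 0 < t)])⟩
  funext z
  simpa [hconst z] using h0

theorem norm_div_sin_pi_mul_le {g : ℂ → ℂ} {C τ : ℝ} (hτ : 0 ≤ τ)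
    (hb : ∀ z, ‖g z‖ ≤ C * exp (τ * ‖z‖)) {a : ℝ} {z : ℂ} (hre : |z.re| ≤ a)
    (him : 1 ≤ |z.im|) :
    ‖g z / Complex.sin (π * z)‖ ≤ 4 * C * exp (τ * a) * exp (-(π - τ) * |z.im|) := by
  have hC : 0 ≤ C := by simpa using (norm_nonneg _).trans (hb 0)
  have hπz : |(π * z : ℂ).im| = π * |z.im| := by simp [abs_mul, abs_of_pos pi_pos]
  have hsin := Complex.exp_abs_im_div_four_le_norm_sin (w := π * z)
    (by rw [hπz]; nlinarith [pi_gt_three])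
  rw [hπz] at hsin
  have hnum : ‖g z‖ ≤ C * exp (τ * (a + |z.im|)) := (hb z).trans (by
    gcongr
    linarith [Complex.norm_le_abs_re_add_abs_im z])
  rw [norm_div, div_le_iff₀ ((by positivity : (0 : ℝ) < _).trans_le hsin)]
  calc ‖g z‖ ≤ C * exp (τ * (a + |z.im|)) := hnum
    _ = 4 * C * exp (τ * a) * exp (-(π - τ) * |z.im|) * (exp (π * |z.im|) / 4) := by
      rw [mul_add, exp_add, show τ * |z.im| = -(π - τ) * |z.im| + π * |z.im| by ring, exp_add]
      ring
    _ ≤ _ := by gcongr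

theorem eq_zero_of_periodic_two_of_intCast_eq_zero {g : ℂ → ℂ} (hg : Differentiable ℂ g)
    (hper : Periodic g 2) (hint : ∀ n : ℤ, g n = 0) {C τ : ℝ} (hτ : 0 ≤ τ) (hτπ : τ < π)
    (hb : ∀ z, ‖g z‖ ≤ C * exp (τ * ‖z‖)) : g = 0 := by
  set s : ℂ → ℂ := fun z ↦ Complex.sin (π * z)
  have hs : Differentiable ℂ s := fun z ↦ (Complex.hasDerivAt_sin_pi_mul z).differentiableAt
  have hgs : ∀ z, s z = 0 → g z = 0 := fun z hz ↦ by
    obtain ⟨n, rfl⟩ := Complex.exists_intCast_eq_of_sin_pi_mul_eq_zero hz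
    exact hint n
  have hs' : ∀ z, s z = 0 → deriv s z ≠ 0 := fun z hz ↦ by
    rw [(Complex.hasDerivAt_sin_pi_mul z).deriv]
    exact mul_ne_zero (by exact_mod_cast pi_ne_zero) (Complex.cos_ne_zero_of_sin_eq_zero hz)
  have hsper : Periodic s 2 := fun z ↦ by
    simp only [s, mul_add, mul_comm (π : ℂ) 2, Complex.sin_add_two_pi]
  have hq : removableDiv g s = 0 := by
    refine eq_zero_of_periodic_of_norm_le_exp_neg (M := 4 * C * exp (τ * 2))
      (differentiable_removableDiv hg hs hgs hs')
      two_pos (by exact_mod_cast hper.removableDiv hsper) (sub_pos.mpr hτπ) fun z hre him ↦ ?_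
    have hsz : s z ≠ 0 := fun hz ↦ by
      obtain ⟨n, rfl⟩ := Complex.exists_intCast_eq_of_sin_pi_mul_eq_zero hz
      norm_num at him
    rw [removableDiv, if_neg hsz]
    exact norm_div_sin_pi_mul_le hτ hb (abs_le.mpr ⟨by linarith [hre.1], hre.2⟩) him
  funext z
  rw [← removableDiv_mul_self hgs z, hq, Pi.zero_apply, zero_mul]

/-- **Theorem (Poritsky, Whittaker 1932; unicity).** Let `f` be an entire function of
exponential type `< π` such that `f^{(2k)}(0) = f^{(2k)}(1) = 0` for all sufficiently
large `k`. Then `f` is a polynomial. -/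
theorem poritsky_whittaker_unicity (f : ℂ → ℂ)
    (hf : Differentiable ℂ f)
    (htype : ∃ τ C : ℝ, τ < π ∧ 0 < C ∧ ∀ z : ℂ, ‖f z‖ ≤ C * Real.exp (τ * ‖z‖))
    (hvanish : ∃ N : ℕ, ∀ k : ℕ, N ≤ k →
      iteratedDeriv (2 * k) f 0 = 0 ∧ iteratedDeriv (2 * k) f 1 = 0) :
    ∃ P : Polynomial ℂ, ∀ z : ℂ, f z = P.eval z := by
  obtain ⟨τ, C, hτπ, hC, hb⟩ := htype
  obtain ⟨N, hN⟩ := hvanish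
  have hb₀ : ∀ z, ‖f z‖ ≤ C * exp (max τ 0 * ‖z‖) := fun z ↦
    (hb z).trans (by gcongr; exact le_max_left _ _)
  set g := iteratedDeriv (2 * N) f
  have hg : Differentiable ℂ g := hf.contDiff.differentiable_iteratedDeriv _ (WithTop.coe_lt_top _)
  have hgN : ∀ k, iteratedDeriv (2 * k) g = iteratedDeriv (2 * (k + N)) f := fun k ↦ by
    rw [iteratedDeriv_iteratedDeriv, mul_add]
  have h₀ := add_eq_zero_of_iteratedDeriv_two_mul_eq_zero hg (c := 0) fun k ↦ by
    rw [hgN]; exact (hN _ (Nat.le_add_left N k)).1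
  have h₁ := add_eq_zero_of_iteratedDeriv_two_mul_eq_zero hg (c := 1) fun k ↦ by
    rw [hgN]; exact (hN _ (Nat.le_add_left N k)).2
  have hper : Periodic g 2 := by simpa using periodic_of_forall_add_add_sub_eq_zero h₀ h₁
  have hint := intCast_eq_zero_of_periodic_two hper (by simpa using h₀ 0) (by simpa using h₁ 0)
  have hg₀ : g = 0 := eq_zero_of_periodic_two_of_intCast_eq_zero hg hper hint (le_max_right _ _)
    (max_lt hτπ pi_pos) (norm_iteratedDeriv_le_of_norm_le_exp hf (le_max_right _ _) hb₀ (2 * N))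
  exact exists_polynomial_eq_of_iteratedDeriv_eq_zero hf hg₀
end

section
/- Let E be an infinite subset of 2ℕ × {0,1}, where 2ℕ denotes the set of even nonnegative integers. Then there exists an uncountable set S of entire functions f: ℂ → ℂ such that each f ∈ S is of order 0 (i.e., for every ε > 0 there exists C > 0 with |f(z)| ≤ C·exp(|z|^ε) for all z ∈ ℂ), is not a polynomial, has all Taylor coefficients at the origin rational, and satisfies f^{(t)}(i) = 0 for every pair (t,i) ∈ (2ℕ × {0,1}) \ E. -/
/-!
Let `T` be an infinite fibre `{t | (t, i) ∈ E}`. A nonzero polynomial of degree `< n` can meet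
any fewer than `n` homogeneous linear conditions on its Taylor coefficients; killing all even Taylor coefficients at
`1 - i` uses only half of the degrees of freedom, and since `T` is infinite the even coefficients
at `i` with index outside `T` and all coefficients at `0` of low order can be killed too. This
gives nonzero rational polynomials `q k` whose supports are disjoint blocks moving to infinity.
Then `F_A = ∑_{k ∈ A} c_k q_k` with tiny rational `c_k` converges locally uniformly, so it is entire
of order `0` and inherits the vanishing conditions, while its Taylor coefficients at `0` are the
rationals `c_k · coeff (q k) n`; these recover `A`, and are infinitely often nonzero if `A` is
infinite.
-/

open Polynomial Filter Topology Real
open scoped Nat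

theorem Set.not_countable_setOf_infinite_nat : ¬ {A : Set ℕ | A.Infinite}.Countable := by
  intro h
  have : Countable (Set ℕ) := by
    rw [← Set.countable_univ_iff]
    refine (h.union Set.Countable.ofPred_finite).mono fun A _ => ?_
    exact (em A.Infinite).imp id Set.not_infinite.mp
  obtain ⟨g, hg⟩ := Countable.exists_injective_nat (Set ℕ)
  exact Function.cantor_injective g hg

theorem Set.Infinite.exists_infinite_fiber {α β : Type*} {E : Set (α × β)} {s : Set β}
    (hE : E.Infinite) (hs : s.Finite) (hEs : ∀ p ∈ E, p.2 ∈ s) :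
    ∃ i ∈ s, {a | (a, i) ∈ E}.Infinite := by
  by_contra! h
  refine hE ((hs.biUnion fun i hi => (h i hi).image (·, i)).subset fun p hp => ?_)
  exact Set.mem_biUnion (hEs p hp) ⟨p.1, hp, rfl⟩

namespace Polynomial

variable {K : Type*} [Field K]

theorem exists_ne_zero_natDegree_lt_taylor_coeff_eq_zero {n : ℕ} (I : Finset (K × ℕ))
    (hI : I.card < n) :
    ∃ P : K[X], P ≠ 0 ∧ P.natDegree < n ∧ ∀ c ∈ I, (taylor c.1 P).coeff c.2 = 0 := by
  let L : degreeLT K n →ₗ[K] I → K :=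
    LinearMap.pi fun c => lcoeff K c.1.2 ∘ₗ taylor c.1.1 ∘ₗ (degreeLT K n).subtype
  have hker : LinearMap.ker L ≠ ⊥ := L.ker_ne_bot_of_finrank_lt <| by
    rwa [(degreeLTEquiv K n).finrank_eq, Module.finrank_fintype_fun_eq_card, Fintype.card_coe,
      Module.finrank_fin_fun]
  obtain ⟨⟨P, hPdeg⟩, hPker, hP0⟩ := Submodule.exists_mem_ne_zero_of_ne_bot hker
  have hP : P ≠ 0 := fun h => hP0 (Subtype.ext h)
  refine ⟨P, hP, (natDegree_lt_iff_degree_lt hP).mpr (mem_degreeLT.mp hPdeg), fun c hc => ?_⟩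
  exact congrFun (LinearMap.mem_ker.mp hPker) ⟨c, hc⟩

theorem exists_taylor_coeff_eq_zero_of_even (a b : K) {T : Set ℕ} (hT : T.Infinite)
    (hTeven : ∀ t ∈ T, Even t) (v : ℕ) :
    ∃ P : K[X], P ≠ 0 ∧ (∀ t, Even t → (taylor b P).coeff t = 0) ∧
      (∀ t, Even t → t ∉ T → (taylor a P).coeff t = 0) ∧ ∀ m < v, P.coeff m = 0 := by
  classical
  obtain ⟨S, hST, hS⟩ := hT.exists_subset_card_eq (v + 1)
  set N := S.sup id
  set evens := (Finset.range (N + 1)).image (2 * ·)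
  set bad := evens.filter (· ∉ T)
  have mem_evens {t : ℕ} (ht : Even t) (htN : t < 2 * N + 2) : t ∈ evens := by
    obtain ⟨j, rfl⟩ := ht
    exact Finset.mem_image.mpr ⟨j, Finset.mem_range.mpr (by omega), by ring⟩
  have hevens : evens.card = N + 1 :=
    (Finset.card_image_of_injective _ (mul_right_injective₀ two_ne_zero)).trans
      (Finset.card_range _)
  -- At least `v + 1` of the `N + 1` even exponents below `2 * N + 2` lie in `T`, so `I` below
  -- imposes at most `(N + 1) + (N - v) + v < 2 * N + 2` conditions.
  have hbad : bad.card + (v + 1) ≤ N + 1 := by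
    have hS_sub : S ⊆ evens.filter (· ∈ T) := fun s hs =>
      Finset.mem_filter.mpr ⟨mem_evens (hTeven s (hST hs))
        (by have : s ≤ N := Finset.le_sup (f := id) hs; omega), hST hs⟩
    have hsplit : (evens.filter (· ∈ T)).card + bad.card = evens.card :=
      Finset.card_filter_add_card_filter_not _
    have := Finset.card_le_card hS_sub
    omega
  let I : Finset (K × ℕ) :=
    evens.image (b, ·) ∪ bad.image (a, ·) ∪ (Finset.range v).image (0, ·)
  have hI : I.card < 2 * N + 2 :=
    calc I.card ≤ evens.card + bad.card + v :=
          (Finset.card_union_le _ _).trans <| add_le_add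
            ((Finset.card_union_le _ _).trans
              (add_le_add Finset.card_image_le Finset.card_image_le))
            (Finset.card_image_le.trans (Finset.card_range v).le)
      _ < 2 * N + 2 := by omega
  obtain ⟨P, hP0, hPdeg, hPI⟩ := exists_ne_zero_natDegree_lt_taylor_coeff_eq_zero I hI
  have coeff_high (r : K) {t : ℕ} (ht : 2 * N + 2 ≤ t) : (taylor r P).coeff t = 0 :=
    coeff_eq_zero_of_natDegree_lt (by rw [natDegree_taylor]; omega)
  refine ⟨P, hP0, fun t ht => ?_, fun t ht htT => ?_, fun m hm => ?_⟩
  · rcases lt_or_ge t (2 * N + 2) with htN | htN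
    · exact hPI (b, t) (by simp [I, mem_evens ht htN])
    · exact coeff_high b htN
  · rcases lt_or_ge t (2 * N + 2) with htN | htN
    · exact hPI (a, t) (by simp [I, bad, mem_evens ht htN, htT])
    · exact coeff_high a htN
  · simpa using hPI (0, m) (by simp [I, hm])

theorem exists_seq_taylor_coeff_eq_zero_of_even (a b : K) {T : Set ℕ} (hT : T.Infinite)
    (hTeven : ∀ t ∈ T, Even t) :
    ∃ q : ℕ → K[X], (∀ k, q k ≠ 0) ∧ (∀ k t, Even t → (taylor b (q k)).coeff t = 0) ∧
      (∀ k t, Even t → t ∉ T → (taylor a (q k)).coeff t = 0) ∧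
      ∀ k, (q k).natDegree < (q (k + 1)).natTrailingDegree := by
  choose P hP0 hPb hPa hPlow using exists_taylor_coeff_eq_zero_of_even a b hT hTeven
  let v : ℕ → ℕ := fun k => Nat.rec 0 (fun _ w => (P w).natDegree + 1) k
  exact ⟨fun k => P (v k), fun k => hP0 _, fun k => hPb _, fun k => hPa _,
    fun k => le_natTrailingDegree (hP0 _) (hPlow _)⟩

section Separated

variable {R : Type*} [Semiring R] {q : ℕ → R[X]}

theorem natDegree_lt_natTrailingDegree_of_lt
    (hsep : ∀ k, (q k).natDegree < (q (k + 1)).natTrailingDegree) {j k : ℕ} (hjk : j < k) :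
    (q j).natDegree < (q k).natTrailingDegree := by
  induction k, hjk using Nat.le_induction with
  | base => exact hsep j
  | succ k _ ih => exact ((ih.trans_le (natTrailingDegree_le_natDegree _))).trans (hsep k)

theorem le_natTrailingDegree_of_separated
    (hsep : ∀ k, (q k).natDegree < (q (k + 1)).natTrailingDegree) (k : ℕ) :
    k ≤ (q k).natTrailingDegree := by
  induction k with
  | zero => exact Nat.zero_le _
  | succ k ih => exact (ih.trans_lt ((natTrailingDegree_le_natDegree _).trans_lt (hsep k)))

theorem coeff_natDegree_eq_zero_of_ne
    (hsep : ∀ k, (q k).natDegree < (q (k + 1)).natTrailingDegree) {j k : ℕ} (hjk : j ≠ k) :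
    (q j).coeff (q k).natDegree = 0 := by
  rcases hjk.lt_or_gt with hjk | hkj
  · exact coeff_eq_zero_of_natDegree_lt
      ((natDegree_lt_natTrailingDegree_of_lt hsep hjk).trans_le (natTrailingDegree_le_natDegree _))
  · exact coeff_eq_zero_of_lt_natTrailingDegree (natDegree_lt_natTrailingDegree_of_lt hsep hkj)

end Separated

end Polynomial

theorem Polynomial.iteratedDeriv_aeval {R : Type*} [CommSemiring R] [Algebra R ℂ] (p : R[X])
    (n : ℕ) : iteratedDeriv n (fun z : ℂ => aeval z p) = fun z => aeval z (derivative^[n] p) := by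
  induction n generalizing p with
  | zero => rfl
  | succ n ih =>
    have hderiv : deriv (fun z : ℂ => aeval z p) = fun z => aeval z (derivative p) :=
      _root_.funext fun z => p.deriv_aeval
    rw [iteratedDeriv_succ', hderiv, ih, Function.iterate_succ_apply]

theorem tendstoLocallyUniformly_aeval_iterate_derivative {R ι : Type*} [CommSemiring R]
    [Algebra R ℂ] {l : Filter ι} {p : ι → R[X]} {F : ℂ → ℂ}
    (hF : TendstoLocallyUniformly (fun i z => aeval z (p i)) F l) (n : ℕ) :
    TendstoLocallyUniformly (fun i z => aeval z (derivative^[n] (p i))) (iteratedDeriv n F)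
      l := by
  induction n with
  | zero => exact hF
  | succ n ih =>
    rw [← tendstoLocallyUniformlyOn_univ] at ih ⊢
    have h := ih.deriv (.of_forall fun i => (derivative^[n] (p i)).differentiableOn_aeval)
      isOpen_univ
    rw [iteratedDeriv_succ]
    convert h using 1
    funext i z
    simp [Function.iterate_succ_apply']

theorem iteratedDeriv_eq_of_tendstoLocallyUniformly_aeval {R ι : Type*} [CommSemiring R]
    [Algebra R ℂ] {l : Filter ι} [l.NeBot] {p : ι → R[X]} {F : ℂ → ℂ}
    (hF : TendstoLocallyUniformly (fun i z => aeval z (p i)) F l) {n : ℕ} {z c : ℂ}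
    (hc : ∀ᶠ i in l, aeval z (derivative^[n] (p i)) = c) :
    iteratedDeriv n F z = c := by
  have hlim := tendstoLocallyUniformlyOn_univ.mpr
    (tendstoLocallyUniformly_aeval_iterate_derivative hF n)
  exact tendsto_nhds_unique (hlim.tendsto_at (Set.mem_univ z))
    (tendsto_const_nhds.congr' (hc.mono fun _ h => h.symm))

theorem pow_div_three_pow_sq_le_exp (D : ℕ) {x : ℝ} (hx : 1 ≤ x) :
    x ^ D / 3 ^ D ^ 2 ≤ exp (log x ^ 2 / 4) := by
  have hexp_le : exp ((D : ℝ) ^ 2) ≤ 3 ^ D ^ 2 := by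
    rw [← Nat.cast_pow, ← mul_one ((D ^ 2 : ℕ) : ℝ), exp_nat_mul]
    exact pow_le_pow_left₀ (exp_pos 1).le (exp_one_lt_d9.trans (by norm_num)).le _
  have hpow : x ^ D = exp (D * log x) := by rw [exp_nat_mul, exp_log (by linarith)]
  calc x ^ D / 3 ^ D ^ 2 ≤ exp (D * log x) / exp ((D : ℝ) ^ 2) := by
        rw [hpow]; exact div_le_div_of_nonneg_left (exp_pos _).le (exp_pos _) hexp_le
    _ = exp (D * log x - (D : ℝ) ^ 2) := (exp_sub _ _).symm
    _ ≤ exp (log x ^ 2 / 4) := exp_le_exp.mpr (by nlinarith [sq_nonneg (log x - 2 * D)])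

theorem exists_exp_log_sq_le {ε : ℝ} (hε : 0 < ε) :
    ∃ C > 0, ∀ x : ℝ, 0 ≤ x → exp (log (1 + x) ^ 2 / 4) ≤ C * exp (x ^ ε) := by
  obtain ⟨x₀, hx₀⟩ := eventually_atTop.mp ((isLittleO_log_rpow_rpow_atTop 2 hε).bound one_pos)
  set x₁ := max x₀ 2
  refine ⟨exp (log (1 + x₁) ^ 2 / 4), exp_pos _, fun x hx => ?_⟩
  rw [← exp_add]
  refine exp_le_exp.mpr ?_
  have hxε : 0 ≤ x ^ ε := rpow_nonneg hx ε
  rcases le_or_gt x x₁ with hxx₁ | hxx₁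
  · have hlog : log (1 + x) ≤ log (1 + x₁) := log_le_log (by linarith) (by linarith)
    have := pow_le_pow_left₀ (log_nonneg (by linarith)) hlog 2
    linarith
  · have hx2 : 2 ≤ x := (le_max_right _ _).trans hxx₁.le
    have hlog : log (1 + x) ≤ 2 * log x := by
      rw [show 2 * log x = log (x ^ 2) by rw [log_pow]; norm_num]
      exact log_le_log (by linarith) (by nlinarith)
    have hlog0 : 0 ≤ log (1 + x) := log_nonneg (by linarith)
    have hbound := hx₀ x ((le_max_left _ _).trans hxx₁.le)
    rw [one_mul, norm_of_nonneg (rpow_nonneg (by linarith) _), norm_of_nonneg hxε,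
      rpow_two] at hbound
    nlinarith

theorem Polynomial.norm_aeval_le_sum_abs_coeff_mul (p : ℚ[X]) {z : ℂ} {R : ℝ} (hz : ‖z‖ ≤ R) :
    ‖aeval z p‖ ≤ (∑ n ∈ p.support, |(p.coeff n : ℝ)|) * (1 + R) ^ p.natDegree := by
  rw [aeval_def, eval₂_eq_sum, sum_def, Finset.sum_mul]
  refine (norm_sum_le _ _).trans (Finset.sum_le_sum fun n hn => ?_)
  rw [norm_mul, norm_pow, eq_ratCast, Complex.norm_ratCast]
  have h1R : 1 ≤ 1 + R := by linarith [norm_nonneg z]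
  gcongr
  calc ‖z‖ ^ n ≤ (1 + R) ^ n := by gcongr; linarith
    _ ≤ (1 + R) ^ p.natDegree := pow_le_pow_right₀ h1R (le_natDegree_of_mem_supp n hn)

-- `3 ^ (- D ^ 2) ≤ exp (- D ^ 2)` absorbs `(1 + R) ^ D` into `exp (log (1 + R) ^ 2 / 4)`
-- uniformly in the degree `D`: this is what makes the series below of order `0`.
noncomputable def lacunaryWeight (p : ℚ[X]) : ℚ :=
  ((∑ n ∈ p.support, |p.coeff n| + 1) * 3 ^ p.natDegree ^ 2)⁻¹

theorem lacunaryWeight_pos (p : ℚ[X]) : 0 < lacunaryWeight p := by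
  unfold lacunaryWeight
  have := Finset.sum_nonneg fun n (_ : n ∈ p.support) => abs_nonneg (p.coeff n)
  positivity

theorem norm_lacunaryWeight_mul_aeval_le (p : ℚ[X]) {z : ℂ} {R : ℝ} (hz : ‖z‖ ≤ R) :
    ‖(lacunaryWeight p : ℂ) * aeval z p‖ ≤ exp (log (1 + R) ^ 2 / 4) := by
  set B := ∑ n ∈ p.support, |(p.coeff n : ℝ)|
  have hB : 0 ≤ B := Finset.sum_nonneg fun n _ => abs_nonneg _
  have hR : 1 ≤ 1 + R := by linarith [norm_nonneg z]
  have hweight : (lacunaryWeight p : ℝ) = ((B + 1) * 3 ^ p.natDegree ^ 2)⁻¹ := by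
    simp [lacunaryWeight, B]
  calc ‖(lacunaryWeight p : ℂ) * aeval z p‖
      ≤ lacunaryWeight p * (B * (1 + R) ^ p.natDegree) := by
        rw [norm_mul, Complex.norm_ratCast, abs_of_pos (by exact_mod_cast lacunaryWeight_pos p)]
        exact mul_le_mul_of_nonneg_left (p.norm_aeval_le_sum_abs_coeff_mul hz)
          (by exact_mod_cast (lacunaryWeight_pos p).le)
    _ = B / (B + 1) * ((1 + R) ^ p.natDegree / 3 ^ p.natDegree ^ 2) := by
        rw [hweight]; field_simp
    _ ≤ 1 * exp (log (1 + R) ^ 2 / 4) := by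
        gcongr
        · exact (div_le_one (by linarith)).mpr (by linarith)
        · exact pow_div_three_pow_sq_le_exp _ hR
    _ = exp (log (1 + R) ^ 2 / 4) := one_mul _

theorem Polynomial.iterate_derivative_eval {R : Type*} [CommSemiring R] (p : R[X]) (t : ℕ)
    (r : R) :
    (derivative^[t] p).eval r = t ! * (taylor r p).coeff t := by
  rw [taylor_coeff, ← factorial_smul_hasseDeriv, LinearMap.smul_apply, nsmul_eq_mul, eval_mul,
    eval_natCast]

theorem Polynomial.aeval_ratCast_iterate_derivative (p : ℚ[X]) (w : ℚ) (t : ℕ) :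
    aeval (w : ℂ) (derivative^[t] p) = t ! * ((taylor w p).coeff t : ℂ) := by
  rw [← eq_ratCast (algebraMap ℚ ℂ), aeval_algebraMap_apply, coe_aeval_eq_eval,
    iterate_derivative_eval, eq_ratCast]
  push_cast
  rfl

section LacunarySeries

variable (q : ℕ → ℚ[X]) (A : Set ℕ)

noncomputable def lacunaryCoeff (k : ℕ) : ℚ := (1 / 2) ^ k * lacunaryWeight (q k)

noncomputable def lacunaryTerm (k : ℕ) : ℚ[X] := A.indicator (fun j => lacunaryCoeff q j • q j) k

noncomputable def lacunaryPartialSum (N : ℕ) : ℚ[X] := ∑ k ∈ Finset.range N, lacunaryTerm q A k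

noncomputable def lacunarySeries (z : ℂ) : ℂ := ∑' k, aeval z (lacunaryTerm q A k)

variable {q A}

theorem norm_aeval_lacunaryTerm_le (k : ℕ) {z : ℂ} {R : ℝ} (hz : ‖z‖ ≤ R) :
    ‖aeval z (lacunaryTerm q A k)‖ ≤ (1 / 2) ^ k * exp (log (1 + R) ^ 2 / 4) := by
  by_cases hk : k ∈ A
  · rw [lacunaryTerm, Set.indicator_of_mem hk, map_smul, Rat.smul_def, lacunaryCoeff,
      Rat.cast_mul, mul_assoc, norm_mul]
    gcongr
    · simp
    · exact norm_lacunaryWeight_mul_aeval_le (q k) hz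
  · rw [lacunaryTerm, Set.indicator_of_notMem hk, map_zero, norm_zero]
    positivity

theorem tendstoLocallyUniformly_lacunaryPartialSum :
    TendstoLocallyUniformly (fun N z => aeval z (lacunaryPartialSum q A N)) (lacunarySeries q A)
      atTop := by
  rw [tendstoLocallyUniformly_iff_forall_isCompact]
  intro K hK
  obtain ⟨R, hKR⟩ := hK.isBounded.subset_closedBall 0
  have h := tendstoUniformlyOn_tsum_nat (f := fun k z => aeval z (lacunaryTerm q A k))
    (s := Metric.closedBall 0 R) (summable_geometric_two.mul_right _) fun k z hz =>
      norm_aeval_lacunaryTerm_le k (R := R) (by simpa using hz)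
  simp only [lacunaryPartialSum, map_sum]
  exact h.mono hKR

theorem differentiable_lacunarySeries : Differentiable ℂ (lacunarySeries q A) := by
  rw [← differentiableOn_univ]
  exact (tendstoLocallyUniformlyOn_univ.mpr
    tendstoLocallyUniformly_lacunaryPartialSum).differentiableOn
      (.of_forall fun N => (lacunaryPartialSum q A N).differentiableOn_aeval) isOpen_univ

theorem norm_lacunarySeries_le (z : ℂ) :
    ‖lacunarySeries q A z‖ ≤ 2 * exp (log (1 + ‖z‖) ^ 2 / 4) :=
  tsum_of_norm_bounded (hasSum_geometric_two.mul_right _) fun k =>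
    norm_aeval_lacunaryTerm_le k le_rfl

theorem exists_norm_lacunarySeries_le_exp_rpow {ε : ℝ} (hε : 0 < ε) :
    ∃ C > 0, ∀ z : ℂ, ‖lacunarySeries q A z‖ ≤ C * Real.exp (‖z‖ ^ ε) := by
  obtain ⟨C, hC, hCle⟩ := exists_exp_log_sq_le hε
  refine ⟨2 * C, by positivity, fun z => (norm_lacunarySeries_le z).trans ?_⟩
  rw [mul_assoc]
  exact mul_le_mul_of_nonneg_left (hCle _ (norm_nonneg z)) zero_le_two

theorem iteratedDeriv_lacunarySeries_eq_zero {w : ℚ} {t : ℕ}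
    (h : ∀ k, (taylor w (q k)).coeff t = 0) : iteratedDeriv t (lacunarySeries q A) w = 0 := by
  refine iteratedDeriv_eq_of_tendstoLocallyUniformly_aeval
    tendstoLocallyUniformly_lacunaryPartialSum (.of_forall fun N => ?_)
  rw [aeval_ratCast_iterate_derivative, lacunaryPartialSum, map_sum, finsetSum_coeff,
    Finset.sum_eq_zero fun k _ => ?_, Rat.cast_zero, mul_zero]
  by_cases hk : k ∈ A
  · simp [lacunaryTerm, hk, h]
  · simp [lacunaryTerm, hk]

theorem coeff_lacunaryPartialSum (N n : ℕ) :
    (lacunaryPartialSum q A N).coeff n =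
      ∑ k ∈ Finset.range N, A.indicator (fun j => lacunaryCoeff q j * (q j).coeff n) k := by
  rw [lacunaryPartialSum, finsetSum_coeff]
  refine Finset.sum_congr rfl fun k _ => ?_
  by_cases hk : k ∈ A <;> simp [lacunaryTerm, hk]

theorem iteratedDeriv_lacunarySeries_zero
    (hsep : ∀ k, (q k).natDegree < (q (k + 1)).natTrailingDegree) (n : ℕ) :
    iteratedDeriv n (lacunarySeries q A) 0 =
      n ! * ((lacunaryPartialSum q A (n + 1)).coeff n : ℂ) := by
  refine iteratedDeriv_eq_of_tendstoLocallyUniformly_aeval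
    tendstoLocallyUniformly_lacunaryPartialSum ((eventually_ge_atTop (n + 1)).mono fun N hN => ?_)
  have h := aeval_ratCast_iterate_derivative (lacunaryPartialSum q A N) 0 n
  rw [Rat.cast_zero, taylor_zero] at h
  rw [h, coeff_lacunaryPartialSum, coeff_lacunaryPartialSum,
    ← Finset.sum_subset (Finset.range_subset_range.mpr hN) fun k _ hk => ?_]
  have hnk : n < (q k).natTrailingDegree :=
    lt_of_lt_of_le (by simpa using hk) (le_natTrailingDegree_of_separated hsep k)
  simp [coeff_eq_zero_of_lt_natTrailingDegree hnk]

theorem iteratedDeriv_lacunarySeries_natDegree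
    (hsep : ∀ k, (q k).natDegree < (q (k + 1)).natTrailingDegree) (k : ℕ) :
    iteratedDeriv (q k).natDegree (lacunarySeries q A) 0 =
      (q k).natDegree ! *
        ((A.indicator (fun j => lacunaryCoeff q j * (q j).leadingCoeff) k : ℚ) : ℂ) := by
  rw [iteratedDeriv_lacunarySeries_zero hsep, coeff_lacunaryPartialSum,
    Finset.sum_eq_single k (fun j _ hjk => ?_) fun hk => ?_]
  · rfl
  · simp [coeff_natDegree_eq_zero_of_ne hsep hjk]
  · exact absurd (Finset.mem_range_succ_iff.mpr ((le_natTrailingDegree_of_separated hsep k).trans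
      (natTrailingDegree_le_natDegree _))) hk

theorem lacunaryCoeff_mul_leadingCoeff_ne_zero {k : ℕ} (hq : q k ≠ 0) :
    lacunaryCoeff q k * (q k).leadingCoeff ≠ 0 :=
  mul_ne_zero (mul_pos (by positivity) (lacunaryWeight_pos _)).ne' (leadingCoeff_ne_zero.mpr hq)

theorem lacunarySeries_injective (hq : ∀ k, q k ≠ 0)
    (hsep : ∀ k, (q k).natDegree < (q (k + 1)).natTrailingDegree) :
    Function.Injective (lacunarySeries q) := by
  intro A B hAB
  ext k
  have h := congrArg (fun F => iteratedDeriv (q k).natDegree F 0) hAB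
  simp only [iteratedDeriv_lacunarySeries_natDegree hsep] at h
  have h' := Rat.cast_injective
    (mul_left_cancel₀ (Nat.cast_ne_zero.mpr (Nat.factorial_ne_zero _)) h)
  have hc := lacunaryCoeff_mul_leadingCoeff_ne_zero (hq k)
  by_cases hA : k ∈ A <;> by_cases hB : k ∈ B <;> simp_all

theorem iteratedDeriv_eval_eq_zero_of_natDegree_lt (P : ℂ[X]) {n : ℕ} (hn : P.natDegree < n) :
    iteratedDeriv n (fun z => P.eval z) = 0 := by
  have h := P.iteratedDeriv_aeval n
  simp only [coe_aeval_eq_eval, iterate_derivative_eq_zero hn, eval_zero] at h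
  exact h

theorem not_exists_polynomial_eq_lacunarySeries (hq : ∀ k, q k ≠ 0)
    (hsep : ∀ k, (q k).natDegree < (q (k + 1)).natTrailingDegree) (hA : A.Infinite) :
    ¬ ∃ P : ℂ[X], ∀ z, lacunarySeries q A z = P.eval z := by
  rintro ⟨P, hP⟩
  obtain ⟨k, hkA, hk⟩ := hA.exists_gt P.natDegree
  have h := iteratedDeriv_lacunarySeries_natDegree (A := A) hsep k
  rw [_root_.funext hP, iteratedDeriv_eval_eq_zero_of_natDegree_lt P (hk.trans_le
    ((le_natTrailingDegree_of_separated hsep k).trans (natTrailingDegree_le_natDegree _))),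
    Set.indicator_of_mem hkA] at h
  have := lacunaryCoeff_mul_leadingCoeff_ne_zero (hq k)
  simp_all [Nat.factorial_ne_zero]

end LacunarySeries

/-- **Lemma 3 (counterexample lemma).** Let `E` be an infinite subset of `2ℕ × {0,1}`.
Then there is an uncountable set `S` of entire functions `f` of order `0`, not
polynomials (hence transcendental), with rational Taylor coefficients at the origin,
such that `f^{(t)}(i) = 0` for all `(t,i) ∈ (2ℕ × {0,1}) \ E`. -/
theorem uncountably_many_counterexamples (E : Set (ℕ × ℕ))
    (hEsub : E ⊆ {p : ℕ × ℕ | Even p.1 ∧ (p.2 = 0 ∨ p.2 = 1)})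
    (hEinf : E.Infinite) :
    ∃ S : Set (ℂ → ℂ), ¬ S.Countable ∧
      ∀ f ∈ S,
        Differentiable ℂ f ∧
        (∀ ε : ℝ, 0 < ε → ∃ C : ℝ, 0 < C ∧ ∀ z : ℂ, ‖f z‖ ≤ C * Real.exp (‖z‖ ^ ε)) ∧
        (¬ ∃ P : Polynomial ℂ, ∀ z : ℂ, f z = P.eval z) ∧
        (∀ n : ℕ, ∃ q : ℚ, iteratedDeriv n f 0 = (Nat.factorial n : ℂ) * (q : ℂ)) ∧
        (∀ t i : ℕ, Even t → (i = 0 ∨ i = 1) → (t, i) ∉ E →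
          iteratedDeriv t f (i : ℂ) = 0) := by
  obtain ⟨i, hi, hT⟩ := hEinf.exists_infinite_fiber (s := {0, 1}) (Set.toFinite _)
    fun p hp => (hEsub hp).2
  obtain ⟨q, hq, hqb, hqa, hsep⟩ := exists_seq_taylor_coeff_eq_zero_of_even (i : ℚ)
    ((1 - i : ℕ) : ℚ) hT fun t ht => (hEsub ht).1
  refine ⟨lacunarySeries q '' {A | A.Infinite}, fun hS => Set.not_countable_setOf_infinite_nat
    (Set.countable_of_injective_of_countable_image (lacunarySeries_injective hq hsep).injOn hS), ?_⟩
  rintro _ ⟨A, hA, rfl⟩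
  refine ⟨differentiable_lacunarySeries, fun ε hε => exists_norm_lacunarySeries_le_exp_rpow hε,
    not_exists_polynomial_eq_lacunarySeries hq hsep hA,
    fun n => ⟨_, iteratedDeriv_lacunarySeries_zero hsep n⟩, fun t l ht hl htl => ?_⟩
  obtain rfl | rfl : l = i ∨ l = 1 - i := by
    simp only [Set.mem_insert_iff, Set.mem_singleton_iff] at hi; omega
  · simpa using iteratedDeriv_lacunarySeries_eq_zero (A := A) (hqa · t ht htl)
  · simpa using iteratedDeriv_lacunarySeries_eq_zero (A := A) (hqb · t ht)
end

section
/- For every z ∈ ℂ and every ζ ∈ ℂ with 0 < |ζ| < π, the identity e^{ζz} = Σ_{k≥0} Λ_{2k,0}(z)·ζ^{2k} + e^{ζ}·Σ_{k≥0} Λ_{2k,1}(z)·ζ^{2k} holds, where both series converge. -/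
/-!
Expanding `X ^ (2n+1) / (2n+1)!` in the Lidstone basis gives
`∑_{k ≤ n} Λ_k(z) / (2(n-k)+1)! = z ^ (2n+1) / (2n+1)!`. With `w = ζ²` this says that, as formal
power series in `w`, `(∑ Λ_k(z) w^k) · A(w) = B(w)` with `A(w) = sinh √w / √w` and
`B(w) = sinh (z √w) / √w`. Both are entire, and `A` has no zero for `|w| < π²`, so `B / A` is
holomorphic there; its Taylor series, which by multiplicativity of Taylor coefficients is
`∑ Λ_k(z) w^k`, converges on that disc. Hence `∑ Λ_k(z) ζ^(2k) = sinh (zζ) / sinh ζ`, and the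
expansion of `e^(ζz)` is the identity `e^(ζz) sinh ζ = sinh ((1-z)ζ) + e^ζ sinh (zζ)`.
-/

open Real

open Polynomial Nat Topology

namespace Polynomial

variable {R : Type*} [CommRing R] [IsDomain R] [CharZero R]

theorem eq_zero_of_iterate_derivative_two_mul_eval_eq_zero {a b : R} (hab : a ≠ b) {p : R[X]}
    (ha : ∀ j, (derivative^[2 * j] p).eval a = 0)
    (hb : ∀ j, (derivative^[2 * j] p).eval b = 0) : p = 0 := by
  classical
  suffices ∀ N, ∀ p : R[X], derivative^[2 * N] p = 0 → (∀ j, (derivative^[2 * j] p).eval a = 0) →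
      (∀ j, (derivative^[2 * j] p).eval b = 0) → p = 0 from
    this (p.natDegree + 1) p (iterate_derivative_eq_zero (by omega)) ha hb
  intro N
  induction N with
  | zero => intro p hp _ _; simpa using hp
  | succ N ih =>
    intro p hp ha hb
    have hp'' : derivative (derivative p) = 0 := by
      refine ih _ ?_ (fun j => ?_) (fun j => ?_)
      · simpa [mul_add, Function.iterate_add_apply] using hp
      · simpa [mul_add, Function.iterate_add_apply] using ha (j + 1)
      · simpa [mul_add, Function.iterate_add_apply] using hb (j + 1)
    have hdeg : p.natDegree ≤ 1 := by
      have := derivative_eq_zero.mp hp''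
      rw [natDegree_derivative] at this
      omega
    refine eq_zero_of_natDegree_lt_card_of_eval_eq_zero' p {a, b} ?_ ?_
    · simpa using ⟨ha 0, hb 0⟩
    · rw [Finset.card_pair hab]; omega

theorem eq_sum_range_C_mul_of_iterate_derivative_eval_zero {Λ : ℕ → R[X]}
    (hΛ0 : ∀ k j : ℕ, (derivative^[2 * j] (Λ k)).eval 0 = 0)
    (hΛ1 : ∀ k j : ℕ, (derivative^[2 * j] (Λ k)).eval 1 = if j = k then 1 else 0)
    {p : R[X]} {N : ℕ} (hpN : p.natDegree < 2 * N) (hp0 : ∀ j, (derivative^[2 * j] p).eval 0 = 0) :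
    p = ∑ k ∈ Finset.range N, C ((derivative^[2 * k] p).eval 1) * Λ k := by
  rw [← sub_eq_zero]
  refine eq_zero_of_iterate_derivative_two_mul_eval_eq_zero zero_ne_one (fun j => ?_) (fun j => ?_)
  · simp [iterate_derivative_sum, iterate_derivative_C_mul, eval_finsetSum, hp0, hΛ0]
  · simp only [iterate_derivative_sub, iterate_derivative_sum, iterate_derivative_C_mul, eval_sub,
      eval_finsetSum, eval_mul, eval_C, hΛ1, mul_ite, mul_one, mul_zero, Finset.sum_ite_eq,
      Finset.mem_range]
    split_ifs with hj
    · exact sub_self _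
    · rw [iterate_derivative_eq_zero (by omega), eval_zero, sub_zero]

variable {K : Type*} [Field K] [CharZero K]

theorem iterate_derivative_C_inv_factorial_mul_X_pow {k m : ℕ} (hkm : k ≤ m) :
    derivative^[k] (C (m ! : K)⁻¹ * X ^ m) = C ((m - k)! : K)⁻¹ * X ^ (m - k) := by
  rw [iterate_derivative_C_mul, iterate_derivative_X_pow_eq_C_mul, ← mul_assoc, ← C_mul,
    ← Nat.factorial_mul_descFactorial hkm]
  congr 2
  have : (m.descFactorial k : K) ≠ 0 := by
    exact_mod_cast (Nat.descFactorial_pos.mpr hkm).ne'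
  push_cast
  field_simp

theorem C_inv_factorial_mul_X_pow_eq_sum_range {Λ : ℕ → K[X]}
    (hΛ0 : ∀ k j : ℕ, (derivative^[2 * j] (Λ k)).eval 0 = 0)
    (hΛ1 : ∀ k j : ℕ, (derivative^[2 * j] (Λ k)).eval 1 = if j = k then 1 else 0) (n : ℕ) :
    C ((2 * n + 1)! : K)⁻¹ * X ^ (2 * n + 1) =
      ∑ k ∈ Finset.range (n + 1), C ((2 * (n - k) + 1)! : K)⁻¹ * Λ k := by
  refine (eq_sum_range_C_mul_of_iterate_derivative_eval_zero hΛ0 hΛ1 (N := n + 1) ?_ ?_).trans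
    (Finset.sum_congr rfl fun k hk => ?_)
  · exact (natDegree_C_mul_X_pow_le _ _).trans_lt (by omega)
  · intro j
    rcases le_or_gt (2 * j) (2 * n + 1) with hj | hj
    · rw [iterate_derivative_C_inv_factorial_mul_X_pow hj]
      simp [zero_pow (show 2 * n + 1 - 2 * j ≠ 0 by omega)]
    · rw [iterate_derivative_eq_zero ((natDegree_C_mul_X_pow_le _ _).trans_lt hj), eval_zero]
  · rw [Finset.mem_range] at hk
    rw [iterate_derivative_C_inv_factorial_mul_X_pow (by omega),
      show 2 * n + 1 - 2 * k = 2 * (n - k) + 1 by omega]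
    simp

end Polynomial

section Taylor

variable {𝕜 : Type*} [NontriviallyNormedField 𝕜] [CompleteSpace 𝕜] [CharZero 𝕜]

noncomputable def taylorPowerSeries (f : 𝕜 → 𝕜) (x : 𝕜) : PowerSeries 𝕜 :=
  PowerSeries.mk fun n => iteratedDeriv n f x / n !

theorem taylorPowerSeries_mul {f g : 𝕜 → 𝕜} {x : 𝕜} (hf : AnalyticAt 𝕜 f x)
    (hg : AnalyticAt 𝕜 g x) :
    taylorPowerSeries (f * g) x = taylorPowerSeries f x * taylorPowerSeries g x := by
  ext n
  simp only [taylorPowerSeries, PowerSeries.coeff_mk, PowerSeries.coeff_mul,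
    iteratedDeriv_mul hf.contDiffAt hg.contDiffAt, Finset.sum_div,
    Finset.Nat.sum_antidiagonal_eq_sum_range_succ_mk]
  refine Finset.sum_congr rfl fun i hi => ?_
  rw [Nat.cast_choose 𝕜 (Finset.mem_range_succ_iff.mp hi)]
  field_simp [Nat.factorial_ne_zero]

theorem HasFPowerSeriesAt.taylorPowerSeries_eq {f : 𝕜 → 𝕜} {x : 𝕜} {a : ℕ → 𝕜}
    (hf : HasFPowerSeriesAt f (FormalMultilinearSeries.ofScalars 𝕜 a) x) :
    taylorPowerSeries f x = PowerSeries.mk a := by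
  have h := hf.analyticAt.hasFPowerSeriesAt.eq_formalMultilinearSeries hf
  rw [FormalMultilinearSeries.ofScalars_series_eq_iff] at h
  ext n
  simpa [taylorPowerSeries] using congrFun h n

end Taylor

theorem hasSum_div_of_mk_mul_eq {A B : ℂ → ℂ} {a b c : ℕ → ℂ} {R : ENNReal}
    (hA : HasFPowerSeriesOnBall A (FormalMultilinearSeries.ofScalars ℂ a) 0 R)
    (hB : HasFPowerSeriesOnBall B (FormalMultilinearSeries.ofScalars ℂ b) 0 R)
    (hA0 : ∀ w ∈ Metric.eball 0 R, A w ≠ 0)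
    (hc : PowerSeries.mk c * PowerSeries.mk a = PowerSeries.mk b)
    {w : ℂ} (hw : w ∈ Metric.eball 0 R) : HasSum (fun n => c n * w ^ n) (B w / A w) := by
  have hball : Metric.eball (0 : ℂ) R ∈ 𝓝 0 := Metric.eball_mem_nhds 0 hA.r_pos
  have hdiv : DifferentiableOn ℂ (B / A) (Metric.eball 0 R) :=
    hB.differentiableOn.div hA.differentiableOn hA0
  have ha := hA.hasFPowerSeriesAt.taylorPowerSeries_eq
  have hmul : taylorPowerSeries (B / A) 0 * PowerSeries.mk a = PowerSeries.mk b := by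
    rw [← ha, ← hB.hasFPowerSeriesAt.taylorPowerSeries_eq,
      ← taylorPowerSeries_mul (hdiv.analyticAt hball) hA.analyticAt]
    ext n
    simp only [taylorPowerSeries, PowerSeries.coeff_mk]
    congr 1
    refine Filter.EventuallyEq.iteratedDeriv_eq n ?_
    filter_upwards [hball] with y hy
    exact div_mul_cancel₀ _ (hA0 y hy)
  have ha0 : PowerSeries.mk a ≠ 0 := by
    rw [← ha]
    intro h
    have h0 := congrArg (PowerSeries.coeff 0) h
    simp only [taylorPowerSeries, PowerSeries.coeff_mk, iteratedDeriv_zero, factorial_zero,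
      cast_one, div_one, map_zero] at h0
    exact hA0 0 (mem_of_mem_nhds hball) h0
  have hT : taylorPowerSeries (B / A) 0 = PowerSeries.mk c :=
    mul_right_cancel₀ ha0 (hmul.trans hc.symm)
  have hcoeff : ∀ n, c n = iteratedDeriv n (B / A) 0 / n ! := fun n => by
    simpa [taylorPowerSeries] using (congrArg (PowerSeries.coeff n) hT).symm
  have := Complex.hasSum_taylorSeries_on_eball hdiv hw
  simp only [sub_zero, smul_eq_mul] at this
  refine this.congr_fun fun n => ?_
  rw [hcoeff]
  ring

theorem Complex.sinh_ne_zero_of_norm_lt_pi {ζ : ℂ} (h0 : ζ ≠ 0) (hπ : ‖ζ‖ < π) :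
    Complex.sinh ζ ≠ 0 := by
  intro hs
  obtain ⟨k, hk⟩ := Complex.sin_eq_zero_iff.mp (by rw [Complex.sin_mul_I, hs, zero_mul] :
    Complex.sin (ζ * Complex.I) = 0)
  have hnorm : ‖ζ‖ = |(k : ℝ)| * π := by
    simpa [abs_of_pos pi_pos] using congrArg norm hk
  have hk0 : k = 0 := by
    rw [← Int.abs_lt_one_iff, ← Int.cast_lt (R := ℝ), Int.cast_abs, Int.cast_one]
    nlinarith [pi_pos]
  simp [hk0, h0] at hk

noncomputable def sinhSqrtSeries (z : ℂ) : FormalMultilinearSeries ℂ ℂ ℂ :=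
  FormalMultilinearSeries.ofScalars ℂ fun k => z ^ (2 * k + 1) / (2 * k + 1)!

theorem sinhSqrtSeries_radius (z : ℂ) : (sinhSqrtSeries z).radius = ⊤ := by
  refine (sinhSqrtSeries z).radius_eq_top_of_summable_norm fun r => ?_
  refine Summable.of_nonneg_of_le (fun n => by positivity) (fun n => ?_)
    ((Real.summable_pow_div_factorial (‖z‖ ^ 2 * r)).mul_left ‖z‖)
  rw [sinhSqrtSeries, FormalMultilinearSeries.ofScalars_norm, norm_div, norm_pow,
    Complex.norm_natCast]
  calc ‖z‖ ^ (2 * n + 1) / (2 * n + 1)! * r ^ n = ‖z‖ * ((‖z‖ ^ 2 * r) ^ n / (2 * n + 1)!) := by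
        ring
    _ ≤ ‖z‖ * ((‖z‖ ^ 2 * r) ^ n / n !) := by
        gcongr
        omega

theorem hasFPowerSeriesOnBall_sinhSqrtSeries (z : ℂ) :
    HasFPowerSeriesOnBall (sinhSqrtSeries z).sum (sinhSqrtSeries z) 0 ⊤ := by
  simpa [sinhSqrtSeries_radius] using
    (sinhSqrtSeries z).hasFPowerSeriesOnBall (by simp [sinhSqrtSeries_radius])

theorem mul_sinhSqrtSeries_sum_sq (z ζ : ℂ) :
    ζ * (sinhSqrtSeries z).sum (ζ ^ 2) = Complex.sinh (z * ζ) := by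
  have h := ((hasFPowerSeriesOnBall_sinhSqrtSeries z).hasSum (y := ζ ^ 2) (by simp)).mul_left ζ
  rw [zero_add] at h
  refine h.unique ((Complex.hasSum_sinh (z * ζ)).congr_fun fun n => ?_)
  simp only [sinhSqrtSeries, FormalMultilinearSeries.ofScalars_apply_eq, smul_eq_mul]
  ring

theorem sinhSqrtSeries_one_sum_ne_zero {w : ℂ} (hw : ‖w‖ < π ^ 2) :
    (sinhSqrtSeries 1).sum w ≠ 0 := by
  obtain ⟨ζ, rfl⟩ := IsAlgClosed.exists_pow_nat_eq w two_pos
  rcases eq_or_ne ζ 0 with rfl | hζ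
  · rw [zero_pow two_ne_zero, ← (hasFPowerSeriesOnBall_sinhSqrtSeries 1).coeff_zero ![]]
    simp [sinhSqrtSeries]
  · have hπ : ‖ζ‖ < π := by
      rw [norm_pow] at hw
      exact lt_of_pow_lt_pow_left₀ 2 pi_pos.le hw
    have := mul_sinhSqrtSeries_sum_sq 1 ζ
    rw [one_mul] at this
    exact right_ne_zero_of_mul (this ▸ Complex.sinh_ne_zero_of_norm_lt_pi hζ hπ)

theorem Complex.exp_mul_mul_sinh (z ζ : ℂ) :
    Complex.exp (ζ * z) * Complex.sinh ζ =
      Complex.sinh ((1 - z) * ζ) + Complex.exp ζ * Complex.sinh (z * ζ) := by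
  simp only [Complex.sinh, sub_mul, one_mul, Complex.exp_sub, Complex.exp_neg]
  field_simp
  ring

theorem hasSum_eval_mul_pow_of_lidstone {Λ : ℕ → ℂ[X]}
    (hΛ0 : ∀ k j : ℕ, (derivative^[2 * j] (Λ k)).eval 0 = 0)
    (hΛ1 : ∀ k j : ℕ, (derivative^[2 * j] (Λ k)).eval 1 = if j = k then 1 else 0)
    (z : ℂ) {ζ : ℂ} (hζ : ζ ≠ 0) (hπ : ‖ζ‖ < π) :
    HasSum (fun k => (Λ k).eval z * ζ ^ (2 * k)) (Complex.sinh (z * ζ) / Complex.sinh ζ) := by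
  have hc : PowerSeries.mk (fun k => (Λ k).eval z) *
      PowerSeries.mk (fun k : ℕ => (1 : ℂ) ^ (2 * k + 1) / (2 * k + 1)!) =
      PowerSeries.mk fun k => z ^ (2 * k + 1) / (2 * k + 1)! := by
    ext n
    have := congrArg (eval z) (C_inv_factorial_mul_X_pow_eq_sum_range hΛ0 hΛ1 n)
    simp only [eval_mul, eval_C, eval_pow, eval_X, eval_finsetSum] at this
    rw [PowerSeries.coeff_mul, Finset.Nat.sum_antidiagonal_eq_sum_range_succ_mk]
    simp only [PowerSeries.coeff_mk, one_pow, one_div]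
    rw [div_eq_inv_mul, this]
    exact Finset.sum_congr rfl fun k _ => mul_comm _ _
  have hR : (0 : ENNReal) < ENNReal.ofReal (π ^ 2) := by simp [pi_pos]
  have hζ2 : ζ ^ 2 ∈ Metric.eball 0 (ENNReal.ofReal (π ^ 2)) := by
    rw [Metric.eball_ofReal, mem_ball_zero_iff, norm_pow]
    exact pow_lt_pow_left₀ hπ (norm_nonneg ζ) two_ne_zero
  have h := hasSum_div_of_mk_mul_eq
    ((hasFPowerSeriesOnBall_sinhSqrtSeries 1).mono hR le_top)
    ((hasFPowerSeriesOnBall_sinhSqrtSeries z).mono hR le_top)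
    (fun w hw => sinhSqrtSeries_one_sum_ne_zero (by
      rwa [Metric.eball_ofReal, mem_ball_zero_iff] at hw)) hc hζ2
  simp only [← pow_mul] at h
  have hA := mul_sinhSqrtSeries_sum_sq 1 ζ
  rw [one_mul] at hA
  rwa [← mul_sinhSqrtSeries_sum_sq, ← hA, mul_div_mul_left _ _ hζ]

/-- **Expansion of the exponential.** For `z ∈ ℂ` and `0 < |ζ| < π`,
`e^{ζz} = Σ_k Λ_{2k,0}(z)·ζ^{2k} + e^{ζ}·Σ_k Λ_{2k,1}(z)·ζ^{2k}`, both series being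
convergent, where `Λ_{2k,0}(z) = Λ_{2k,1}(1 − z)`. -/
theorem lidstone_expansion_of_exp (Λ : ℕ → Polynomial ℂ)
    (hΛ0 : ∀ k j : ℕ, (Polynomial.derivative^[2 * j] (Λ k)).eval 0 = 0)
    (hΛ1 : ∀ k j : ℕ,
      (Polynomial.derivative^[2 * j] (Λ k)).eval 1 = if j = k then 1 else 0) :
    ∀ z ζ : ℂ, 0 < ‖ζ‖ → ‖ζ‖ < π →
      Summable (fun k : ℕ => (Λ k).eval (1 - z) * ζ ^ (2 * k)) ∧
      Summable (fun k : ℕ => (Λ k).eval z * ζ ^ (2 * k)) ∧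
      Complex.exp (ζ * z) =
        (∑' k : ℕ, (Λ k).eval (1 - z) * ζ ^ (2 * k)) +
          Complex.exp ζ * (∑' k : ℕ, (Λ k).eval z * ζ ^ (2 * k)) := by
  intro z ζ hζ hπ
  have hζ0 : ζ ≠ 0 := norm_pos_iff.mp hζ
  have h1 := hasSum_eval_mul_pow_of_lidstone hΛ0 hΛ1 (1 - z) hζ0 hπ
  have h2 := hasSum_eval_mul_pow_of_lidstone hΛ0 hΛ1 z hζ0 hπ
  refine ⟨h1.summable, h2.summable, ?_⟩
  rw [h1.tsum_eq, h2.tsum_eq, ← mul_div_assoc, ← add_div,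
    eq_div_iff (Complex.sinh_ne_zero_of_norm_lt_pi hζ0 hπ)]
  exact Complex.exp_mul_mul_sinh z ζ
end

section
/- For every integer k ≥ 0 and every z ∈ ℂ, the Lidstone polynomial satisfies Λ_{2k,1}(z) = (2^{2k+1}/(2k+1)!)·B_{2k+1}((1+z)/2), where B_n denotes the n-th Bernoulli polynomial. -/
/-!
The Lidstone conditions determine a polynomial: if all even derivatives of `p` vanish at two
distinct points, then by induction on the degree `p'' = 0`, so `p` is affine with two roots.
It remains to check the conditions for the Bernoulli side. The `m`-th derivative of `Bₙ` is
`n⋯(n-m+1) B_{n-m}`; odd Bernoulli polynomials vanish at `1/2` by the reflection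
`Bₙ(1 - x) = (-1)ⁿ Bₙ(x)`, and `Bₙ(1) = 0` for odd `n ≥ 3` while `B₁(1) = 1/2`.
-/

open Polynomial

namespace Polynomial

theorem iterate_derivative_comp_C_mul_X_add_C {R : Type*} [CommSemiring R] (p : R[X]) (a b : R)
    (m : ℕ) :
    derivative^[m] (p.comp (C a * X + C b)) =
      C (a ^ m) * (derivative^[m] p).comp (C a * X + C b) := by
  induction m with
  | zero => simp
  | succ m ih =>
    rw [Function.iterate_succ_apply', ih, derivative_C_mul, derivative_comp,
      Function.iterate_succ_apply']
    simp only [derivative_add, derivative_C_mul_X, derivative_C, add_zero, pow_succ, C_mul]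
    ring

theorem iterate_derivative_bernoulli (n m : ℕ) :
    derivative^[m] (bernoulli n) = (n.descFactorial m : ℚ[X]) * bernoulli (n - m) := by
  induction m with
  | zero => simp
  | succ m ih =>
    rw [Function.iterate_succ_apply', ih, derivative_natCast_mul, derivative_bernoulli,
      Nat.descFactorial_succ, Nat.sub_sub]
    push_cast
    ring

theorem bernoulli_eval_half_of_odd {n : ℕ} (hn : Odd n) : (bernoulli n).eval (1 / 2) = 0 := by
  have h := bernoulli_eval_one_sub n (1 / 2)
  rw [hn.neg_one_pow] at h
  norm_num at h
  linarith

theorem eq_zero_of_forall_iterate_derivative_two_mul_eval_eq_zero {R : Type*} [CommRing R]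
    [IsDomain R] [IsAddTorsionFree R] {a b : R} (hab : a ≠ b) {p : R[X]}
    (ha : ∀ j, (derivative^[2 * j] p).eval a = 0) (hb : ∀ j, (derivative^[2 * j] p).eval b = 0) :
    p = 0 := by
  classical
  induction hn : p.natDegree using Nat.strong_induction_on generalizing p with
  | _ n ih =>
    have shift (c : R) (hc : ∀ j, (derivative^[2 * j] p).eval c = 0) (j : ℕ) :
        (derivative^[2 * j] (derivative^[2] p)).eval c = 0 := by
      rw [← Function.iterate_add_apply]
      exact hc (j + 1)
    have hp₂ : derivative^[2] p = 0 := by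
      rcases lt_or_ge n 2 with hn₂ | hn₂
      · exact iterate_derivative_eq_zero (hn ▸ hn₂)
      · refine ih _ ?_ (shift a ha) (shift b hb) rfl
        simp only [Function.iterate_succ_apply', Function.iterate_zero_apply, natDegree_derivative]
        omega
    have hdeg : p.natDegree < ({a, b} : Finset R).card := by
      rw [Function.iterate_succ_apply', Function.iterate_one, derivative_eq_zero,
        natDegree_derivative] at hp₂
      rw [Finset.card_pair hab]
      omega
    refine eq_zero_of_natDegree_lt_card_of_eval_eq_zero' p {a, b} ?_ hdeg
    simpa using ⟨ha 0, hb 0⟩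

/-- The Lidstone polynomial `Λ_{2k,1}`, introduced by its Bernoulli closed form. -/
noncomputable def lidstone (k : ℕ) : ℚ[X] :=
  C (2 ^ (2 * k + 1) / (2 * k + 1).factorial : ℚ) *
    (bernoulli (2 * k + 1)).comp (C 2⁻¹ * X + C 2⁻¹)

theorem iterate_derivative_lidstone_eval (k m : ℕ) (x : ℚ) :
    (derivative^[m] (lidstone k)).eval x =
      2 ^ (2 * k + 1) / (2 * k + 1).factorial * 2⁻¹ ^ m * (2 * k + 1).descFactorial m *
        (bernoulli (2 * k + 1 - m)).eval (2⁻¹ * x + 2⁻¹) := by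
  rw [lidstone, iterate_derivative_C_mul, iterate_derivative_comp_C_mul_X_add_C,
    iterate_derivative_bernoulli]
  simp only [eval_mul, eval_C, eval_comp, eval_add, eval_X, eval_natCast]
  ring

theorem lidstone_iterate_derivative_two_mul_eval_zero (k j : ℕ) :
    (derivative^[2 * j] (lidstone k)).eval 0 = 0 := by
  rw [iterate_derivative_lidstone_eval]
  rcases le_or_gt (2 * j) (2 * k + 1) with hjk | hjk
  · rw [mul_zero, zero_add, inv_eq_one_div, bernoulli_eval_half_of_odd ⟨k - j, by omega⟩, mul_zero]
  · rw [Nat.descFactorial_eq_zero_iff_lt.mpr hjk]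
    simp

theorem lidstone_iterate_derivative_two_mul_eval_one (k j : ℕ) :
    (derivative^[2 * j] (lidstone k)).eval 1 = if j = k then 1 else 0 := by
  rw [iterate_derivative_lidstone_eval, show (2⁻¹ * 1 + 2⁻¹ : ℚ) = 1 by norm_num,
    bernoulli_eval_one]
  rcases lt_trichotomy j k with hjk | rfl | hjk
  · rw [bernoulli'_eq_zero_of_odd ⟨k - j, by omega⟩ (by omega), if_neg hjk.ne, mul_zero]
  · rw [if_pos rfl, ← Nat.factorial_mul_descFactorial (show 2 * j ≤ 2 * j + 1 by omega),
      show 2 * j + 1 - 2 * j = 1 by omega, bernoulli'_one, Nat.factorial_one]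
    push_cast
    field_simp
    rw [pow_succ, mul_right_comm, ← mul_pow]
    norm_num
  · rw [Nat.descFactorial_eq_zero_iff_lt.mpr (by omega), if_neg hjk.ne']
    simp

theorem aeval_lidstone {K : Type*} [Field K] [CharZero K] (k : ℕ) (x : K) :
    aeval x (lidstone k) =
      2 ^ (2 * k + 1) / (2 * k + 1).factorial * aeval ((1 + x) / 2) (bernoulli (2 * k + 1)) := by
  simp only [lidstone, map_mul, aeval_C, aeval_comp, map_add, aeval_X, map_div₀, map_pow,
    map_natCast, map_ofNat, map_inv₀]
  ring_nf

end Polynomial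

/-- **Relation with Bernoulli polynomials.** For every `k ≥ 0` and `z ∈ ℂ`,
`Λ_{2k,1}(z) = (2^{2k+1}/(2k+1)!)·B_{2k+1}((1+z)/2)`, where `B_n` is the `n`-th
Bernoulli polynomial (generating function `Σ_n B_n(x) t^n/n! = t e^{tx}/(e^t − 1)`). -/
theorem lidstone_eq_bernoulli (Λ : ℕ → Polynomial ℂ)
    (hΛ0 : ∀ k j : ℕ, (Polynomial.derivative^[2 * j] (Λ k)).eval 0 = 0)
    (hΛ1 : ∀ k j : ℕ,
      (Polynomial.derivative^[2 * j] (Λ k)).eval 1 = if j = k then 1 else 0) :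
    ∀ (k : ℕ) (z : ℂ),
      (Λ k).eval z =
        (2 ^ (2 * k + 1) / (Nat.factorial (2 * k + 1) : ℂ)) *
          Polynomial.aeval ((1 + z) / 2) (Polynomial.bernoulli (2 * k + 1)) := by
  intro k z
  have hΛk : Λ k = (lidstone k).map (algebraMap ℚ ℂ) := by
    rw [← sub_eq_zero]
    refine eq_zero_of_forall_iterate_derivative_two_mul_eval_eq_zero zero_ne_one
      (fun j => ?_) (fun j => ?_)
    · rw [iterate_derivative_sub, eval_sub, hΛ0, iterate_derivative_map, eval_zero_map,
        lidstone_iterate_derivative_two_mul_eval_zero, map_zero, sub_self]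
    · rw [iterate_derivative_sub, eval_sub, hΛ1, iterate_derivative_map, eval_one_map,
        lidstone_iterate_derivative_two_mul_eval_one, apply_ite (algebraMap ℚ ℂ), map_one,
        map_zero, sub_self]
  rw [hΛk, eval_map_algebraMap, aeval_lidstone]
end

section
/- For every integer k ≥ 0 and every z ∈ ℂ, the Lidstone polynomial satisfies Λ_{2k,1}(z+1) − Λ_{2k,1}(z−1) = 2·z^{2k}/(2k)!. -/
/-!
The conditions at `0` kill every even coefficient of `Λ_{2k,1}`, so `Λ_{2k,1}` is odd and its
`n`-th derivative has parity `(-1)^(n+1)`. Hence the `n`-th coefficient of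
`Λ_{2k,1}(z + 1) - Λ_{2k,1}(z - 1)` is `(1 + (-1)^n) Λ_{2k,1}^{(n)}(1) / n!`, which the
conditions at `1` turn into `2 δ_{n,2k} / (2k)!`.
-/

open Polynomial Nat

namespace Polynomial

section CommRing

variable {R : Type*} [CommRing R]

theorem eval_neg_of_coeff_eq_zero_of_odd {p : R[X]} {s : ℕ}
    (h : ∀ i, Odd (i + s) → p.coeff i = 0) (x : R) :
    p.eval (-x) = (-1) ^ s * p.eval x := by
  rw [eval_eq_sum_range, eval_eq_sum_range, Finset.mul_sum]
  refine Finset.sum_congr rfl fun i _ => ?_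
  rcases Nat.even_or_odd (i + s) with he | ho
  · rw [neg_pow, neg_one_pow_congr (Nat.even_add.mp he)]
    ring
  · simp [h i ho]

theorem coeff_eq_hasseDeriv_eval_zero (p : R[X]) (n : ℕ) :
    p.coeff n = (hasseDeriv n p).eval 0 := by
  rw [← taylor_coeff, taylor_zero]

theorem factorial_mul_hasseDeriv_eval (p : R[X]) (n : ℕ) (r : R) :
    (n ! : R) * (hasseDeriv n p).eval r = (derivative^[n] p).eval r := by
  rw [← factorial_smul_hasseDeriv, LinearMap.smul_apply, eval_smul, nsmul_eq_mul]

theorem hasseDeriv_eval_neg_of_coeff_two_mul_eq_zero {p : R[X]}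
    (h : ∀ m, p.coeff (2 * m) = 0) (n : ℕ) (x : R) :
    (hasseDeriv n p).eval (-x) = (-1) ^ (n + 1) * (hasseDeriv n p).eval x := by
  refine eval_neg_of_coeff_eq_zero_of_odd (fun i hi => ?_) x
  obtain ⟨m, hm⟩ : Even (i + n) := by simpa [← add_assoc, Nat.odd_add_one] using hi
  rw [hasseDeriv_coeff, hm, ← two_mul, h, mul_zero]

end CommRing

section CharZero

variable {K : Type*} [Field K] [CharZero K]

theorem hasseDeriv_eval_eq_div_factorial (p : K[X]) (n : ℕ) (r : K) :
    (hasseDeriv n p).eval r = (derivative^[n] p).eval r / n ! := by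
  rw [← factorial_mul_hasseDeriv_eval,
    mul_div_cancel_left₀ _ (cast_ne_zero.mpr n.factorial_ne_zero)]

theorem lidstone_taylor_one_sub_taylor_neg_one (P : K[X]) (k : ℕ)
    (h0 : ∀ j, (derivative^[2 * j] P).eval 0 = 0)
    (h1 : ∀ j, (derivative^[2 * j] P).eval 1 = if j = k then 1 else 0) :
    taylor 1 P - taylor (-1) P = C (2 / (2 * k)! : K) * X ^ (2 * k) := by
  have hodd : ∀ m, P.coeff (2 * m) = 0 := fun m => by
    rw [coeff_eq_hasseDeriv_eval_zero, hasseDeriv_eval_eq_div_factorial, h0, zero_div]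
  ext n
  rw [coeff_sub, taylor_coeff, taylor_coeff, hasseDeriv_eval_neg_of_coeff_two_mul_eq_zero hodd,
    coeff_C_mul_X_pow]
  rcases Nat.even_or_odd' n with ⟨j, rfl | rfl⟩
  · rw [pow_succ, (even_two_mul j).neg_one_pow, hasseDeriv_eval_eq_div_factorial, h1]
    by_cases hjk : j = k
    · subst hjk
      rw [if_pos rfl, if_pos rfl]
      ring
    · rw [if_neg hjk, if_neg (by omega)]
      ring
  · rw [pow_succ, Odd.neg_one_pow ⟨j, rfl⟩, if_neg (by omega)]
    ring

end CharZero

end Polynomial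

/-- For every `k ≥ 0` and `z ∈ ℂ`, `Λ_{2k,1}(z+1) − Λ_{2k,1}(z−1) = 2·z^{2k}/(2k)!`. -/
theorem lidstone_difference_equation (Λ : ℕ → Polynomial ℂ)
    (hΛ0 : ∀ k j : ℕ, (Polynomial.derivative^[2 * j] (Λ k)).eval 0 = 0)
    (hΛ1 : ∀ k j : ℕ,
      (Polynomial.derivative^[2 * j] (Λ k)).eval 1 = if j = k then 1 else 0) :
    ∀ (k : ℕ) (z : ℂ),
      (Λ k).eval (z + 1) - (Λ k).eval (z - 1) =
        2 * z ^ (2 * k) / (Nat.factorial (2 * k) : ℂ) := by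
  intro k z
  have h := congrArg (eval z) (lidstone_taylor_one_sub_taylor_neg_one (Λ k) k (hΛ0 k) (hΛ1 k))
  rw [eval_sub, taylor_eval, taylor_eval, eval_C_mul, eval_X_pow, ← sub_eq_add_neg] at h
  rw [h, div_mul_eq_mul_div]
end

section
/- Let f: ℂ → ℂ be an entire function, let τ ≥ 0 and C > 0 satisfy |f(z)| ≤ C·e^{τ|z|} for all z ∈ ℂ, and let F(ζ) = Σ_{n≥0} f^{(n)}(0)·ζ^{−n−1}, a series which converges absolutely for |ζ| > τ. Then for every real r > τ, every integer t ≥ 0 and every z ∈ ℂ, f^{(t)}(z) = (1/(2πi))·∮_{|ζ|=r} ζ^{t}·e^{ζz}·F(ζ) dζ, where the integral is taken counterclockwise over the circle of radius r centered at the origin. -/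
/-!
Cauchy's estimate on the circle of radius `n / σ`, combined with Stirling's bound
`n! ≤ e √n (n / e) ^ n`, gives `‖f⁽ⁿ⁾(0)‖ ≤ C e √n σ ^ n` for every `σ ≥ τ`; hence the series
of `F` converges absolutely, and uniformly on every circle `|ζ| = r > τ`. Integrating term by
term, `∮ ζ ^ (t - n - 1) e ^ (ζ z) dζ` vanishes for `n < t` by Cauchy's theorem and equals
`2πi z ^ (n - t) / (n - t)!` for `n ≥ t` by Cauchy's formula for the derivatives of `ζ ↦ e ^ (ζ z)`.
What remains is `2πi` times the Taylor series of `f⁽ᵗ⁾` at `0`, evaluated at `z`.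
-/

open Real Filter Metric
open Complex hiding exp

theorem factorial_le_exp_one_mul_sqrt_mul_div_exp_one_pow {n : ℕ} (hn : n ≠ 0) :
    (n.factorial : ℝ) ≤ exp 1 * √n * (n / exp 1) ^ n := by
  have h : Stirling.stirlingSeq n ≤ Stirling.stirlingSeq 1 := by
    obtain ⟨k, rfl⟩ := Nat.exists_eq_succ_of_ne_zero hn
    exact Stirling.stirlingSeq'_antitone (Nat.zero_le k)
  have hpos : 0 < √(2 * n : ℝ) * (n / exp 1) ^ n := by positivity
  rw [Stirling.stirlingSeq_one, Stirling.stirlingSeq, div_le_iff₀ hpos] at h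
  calc (n.factorial : ℝ) ≤ exp 1 / √2 * (√(2 * n : ℝ) * (n / exp 1) ^ n) := h
    _ = exp 1 * √n * (n / exp 1) ^ n := by
      rw [Real.sqrt_mul zero_le_two]
      field_simp

theorem norm_iteratedDeriv_zero_le_of_norm_le_mul_exp {E : Type*} [NormedAddCommGroup E]
    [NormedSpace ℂ E] [CompleteSpace E] {f : ℂ → E} (hf : Differentiable ℂ f) {C τ σ : ℝ}
    (hbound : ∀ z, ‖f z‖ ≤ C * exp (τ * ‖z‖)) (hσ : 0 < σ) (hτσ : τ ≤ σ) {n : ℕ} (hn : n ≠ 0) :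
    ‖iteratedDeriv n f 0‖ ≤ C * exp 1 * √n * σ ^ n := by
  have hC : 0 ≤ C := by simpa using (norm_nonneg _).trans (hbound 0)
  have hs : 0 < n / σ := by positivity
  have hτs : τ * (n / σ) ≤ n := by
    calc τ * (n / σ) ≤ σ * (n / σ) := by gcongr
      _ = n := by field_simp
  have cauchy := Complex.norm_iteratedDeriv_le_of_forall_mem_sphere_norm_le n hs hf.diffContOnCl
    fun z hz => (mem_sphere_zero_iff_norm.mp hz) ▸ hbound z
  calc ‖iteratedDeriv n f 0‖ ≤ n.factorial * (C * exp (τ * (n / σ))) / (n / σ) ^ n := cauchy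
    _ ≤ (exp 1 * √n * (n / exp 1) ^ n) * (C * exp n) / (n / σ) ^ n := by
      gcongr
      exact factorial_le_exp_one_mul_sqrt_mul_div_exp_one_pow hn
    _ = C * exp 1 * √n * σ ^ n := by
      rw [div_pow, div_pow, ← exp_one_pow]
      field_simp

theorem summable_norm_iteratedDeriv_mul_zpow_neg_sub_one {f : ℂ → ℂ} (hf : Differentiable ℂ f)
    {C τ : ℝ} (hbound : ∀ z, ‖f z‖ ≤ C * exp (τ * ‖z‖)) (hτ : 0 ≤ τ) {ζ : ℂ} (hζ : τ < ‖ζ‖) :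
    Summable fun n : ℕ => ‖iteratedDeriv n f 0 * ζ ^ (-(n : ℤ) - 1)‖ := by
  have hC : 0 ≤ C := by simpa using (norm_nonneg _).trans (hbound 0)
  set R := ‖ζ‖
  have hR : 0 < R := hτ.trans_lt hζ
  set σ := max τ (R / 2)
  have hσ : 0 < σ := lt_max_of_lt_right (by positivity)
  have hσR : σ / R < 1 := (div_lt_one hR).mpr (max_lt hζ (by linarith))
  have hgeom : Summable fun n : ℕ => (n : ℝ) ^ 1 * (σ / R) ^ n :=
    summable_pow_mul_geometric_of_norm_lt_one 1 (by rwa [norm_of_nonneg (by positivity)])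
  refine (hgeom.mul_left (C * exp 1 / R)).of_norm_bounded_eventually_nat ?_
  filter_upwards [eventually_ne_atTop 0] with n hn
  have hsqrt : √(n : ℝ) ≤ n := (sqrt_le_left (Nat.cast_nonneg n)).mpr
    (le_self_pow₀ (Nat.one_le_cast.mpr (Nat.one_le_iff_ne_zero.mpr hn)) two_ne_zero)
  calc ‖‖iteratedDeriv n f 0 * ζ ^ (-(n : ℤ) - 1)‖‖
      = ‖iteratedDeriv n f 0‖ / R ^ (n + 1) := by
        rw [norm_norm, norm_mul, norm_zpow,
          show -(n : ℤ) - 1 = -((n + 1 : ℕ) : ℤ) by push_cast; ring, zpow_neg, zpow_natCast,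
          div_eq_mul_inv]
    _ ≤ C * exp 1 * n * σ ^ n / R ^ (n + 1) := by
      gcongr
      calc ‖iteratedDeriv n f 0‖ ≤ C * exp 1 * √n * σ ^ n :=
            norm_iteratedDeriv_zero_le_of_norm_le_mul_exp hf hbound hσ (le_max_left _ _) hn
        _ ≤ C * exp 1 * n * σ ^ n := by gcongr
    _ = C * exp 1 / R * ((n : ℝ) ^ 1 * (σ / R) ^ n) := by
      rw [div_pow, pow_succ]
      field_simp

theorem circleIntegral.hasSum_of_norm_le {E ι : Type*} [NormedAddCommGroup E] [NormedSpace ℂ E]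
    [CompleteSpace E] [Countable ι] {F : ι → ℂ → E} {c : ℂ} {R : ℝ} (hR : 0 ≤ R)
    (hF : ∀ i, CircleIntegrable (F i) c R) {u : ι → ℝ} (hu : Summable u)
    (hFu : ∀ i, ∀ z ∈ sphere c R, ‖F i z‖ ≤ u i) :
    HasSum (fun i => ∮ z in C(c, R), F i z) (∮ z in C(c, R), ∑' i, F i z) := by
  have hsphere (θ : ℝ) : circleMap c R θ ∈ sphere c R := circleMap_mem_sphere c hR θ
  refine intervalIntegral.hasSum_integral_of_dominated_convergence (fun i _ => R * u i)
    (fun i => (hF i).out.def'.1) (fun i => .of_forall fun θ _ => ?_)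
    (.of_forall fun _ _ => hu.mul_left R) intervalIntegrable_const
    (.of_forall fun θ _ => ?_)
  · rw [norm_smul, deriv_circleMap, norm_mul, norm_circleMap_zero, Complex.norm_I, mul_one,
      abs_of_nonneg hR]
    exact mul_le_mul_of_nonneg_left (hFu i _ (hsphere θ)) hR
  · exact (hu.of_norm_bounded (hFu · _ (hsphere θ))).hasSum.const_smul _

theorem circleIntegral_pow_mul_cexp_mul_eq_zero {R : ℝ} (hR : 0 ≤ R) (z : ℂ) (k : ℕ) :
    ∮ ζ in C(0, R), ζ ^ k * cexp (ζ * z) = 0 :=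
  (Differentiable.diffContOnCl (by fun_prop)).circleIntegral_eq_zero hR

theorem circleIntegral_zpow_neg_succ_mul_cexp_mul {R : ℝ} (hR : 0 < R) (z : ℂ) (k : ℕ) :
    ∮ ζ in C(0, R), ζ ^ (-(k + 1 : ℤ)) * cexp (ζ * z) = 2 * π * I * (z ^ k / k.factorial) := by
  have h := (Differentiable.differentiableOn (s := closedBall 0 R)
    (f := fun ζ => cexp (z * ζ)) (by fun_prop)).circleIntegral_one_div_sub_center_pow_smul hR k
  simp only [iteratedDeriv_cexp_const_mul, sub_zero, smul_eq_mul, mul_zero, Complex.exp_zero,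
    mul_one] at h
  convert h using 1
  · congr 1
    ext ζ
    rw [mul_comm z, one_div, ← zpow_natCast, ← zpow_neg]
    push_cast
    rfl
  · ring

theorem hasSum_iteratedDeriv_add_mul_pow_div_factorial {f : ℂ → ℂ} (hf : Differentiable ℂ f)
    (t : ℕ) (c z : ℂ) :
    HasSum (fun m : ℕ => iteratedDeriv (m + t) f c * ((z - c) ^ m / m.factorial))
      (iteratedDeriv t f z) := by
  have hft : Differentiable ℂ (iteratedDeriv t f) :=
    (hf.contDiff (n := ⊤)).differentiable_iteratedDeriv t (WithTop.coe_lt_top _)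
  have hcomp (m : ℕ) : iteratedDeriv m (iteratedDeriv t f) = iteratedDeriv (m + t) f := by
    simp only [iteratedDeriv_eq_iterate, ← Function.iterate_add_apply]
  refine (Complex.hasSum_taylorSeries_of_entire hft c z).congr_fun fun m => ?_
  rw [hcomp, smul_eq_mul, smul_eq_mul]
  ring

theorem hasSum_circleIntegral_pow_mul_cexp_mul_tsum {r : ℝ} (hr : 0 < r) {a : ℕ → ℂ}
    (ha : Summable fun n : ℕ => ‖a n * (r : ℂ) ^ (-(n : ℤ) - 1)‖) (t : ℕ) (z : ℂ) :
    HasSum (fun n : ℕ => ∮ ζ in C(0, r), ζ ^ t * cexp (ζ * z) * (a n * ζ ^ (-(n : ℤ) - 1)))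
      (∮ ζ in C(0, r), ζ ^ t * cexp (ζ * z) * ∑' n : ℕ, a n * ζ ^ (-(n : ℤ) - 1)) := by
  have hF (n : ℕ) :
      CircleIntegrable (fun ζ => ζ ^ t * cexp (ζ * z) * (a n * ζ ^ (-(n : ℤ) - 1))) 0 r := by
    have : ∀ ζ ∈ sphere (0 : ℂ) r, ζ ≠ 0 ∨ 0 ≤ -(n : ℤ) - 1 :=
      fun ζ hζ => .inl (ne_of_mem_sphere hζ hr.ne')
    exact ContinuousOn.circleIntegrable hr.le (by fun_prop (disch := assumption))
  have hFu (n : ℕ) : ∀ ζ ∈ sphere (0 : ℂ) r, ‖ζ ^ t * cexp (ζ * z) * (a n * ζ ^ (-(n : ℤ) - 1))‖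
      ≤ r ^ t * exp (r * ‖z‖) * ‖a n * (r : ℂ) ^ (-(n : ℤ) - 1)‖ := by
    intro ζ hζ
    rw [mem_sphere_zero_iff_norm] at hζ
    have hexp : ‖cexp (ζ * z)‖ ≤ exp (r * ‖z‖) := by
      simpa only [norm_mul, hζ] using norm_exp_le_exp_norm (ζ * z)
    rw [norm_mul, norm_mul, norm_mul, norm_mul, norm_pow, norm_zpow, norm_zpow, hζ,
      Complex.norm_real, norm_of_nonneg hr.le]
    gcongr
  simpa only [tsum_mul_left] using
    circleIntegral.hasSum_of_norm_le hr.le hF (ha.mul_left _) hFu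

theorem hasSum_circleIntegral_pow_mul_cexp_mul_iteratedDeriv {f : ℂ → ℂ}
    (hf : Differentiable ℂ f) {r : ℝ} (hr : 0 < r) (t : ℕ) (z : ℂ) :
    HasSum (fun n : ℕ => ∮ ζ in C(0, r),
        ζ ^ t * cexp (ζ * z) * (iteratedDeriv n f 0 * ζ ^ (-(n : ℤ) - 1)))
      (2 * π * I * iteratedDeriv t f z) := by
  have hterm (n : ℕ) : (∮ ζ in C(0, r),
      ζ ^ t * cexp (ζ * z) * (iteratedDeriv n f 0 * ζ ^ (-(n : ℤ) - 1))) =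
      iteratedDeriv n f 0 * ∮ ζ in C(0, r), ζ ^ ((t : ℤ) - n - 1) * cexp (ζ * z) := by
    rw [← circleIntegral.integral_const_mul]
    refine circleIntegral.integral_congr hr.le fun ζ hζ => ?_
    have hζ0 : ζ ≠ 0 := ne_of_mem_sphere hζ hr.ne'
    rw [show (t : ℤ) - n - 1 = t + (-(n : ℤ) - 1) by ring, zpow_add₀ hζ0, zpow_natCast]
    ring
  simp only [hterm]
  rw [← hasSum_nat_add_iff' t]
  have hlow : ∑ i ∈ Finset.range t,
      iteratedDeriv i f 0 * ∮ ζ in C(0, r), ζ ^ ((t : ℤ) - i - 1) * cexp (ζ * z) = 0 := by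
    refine Finset.sum_eq_zero fun i hi => ?_
    have hi : i < t := Finset.mem_range.mp hi
    rw [show (t : ℤ) - i - 1 = ((t - i - 1 : ℕ) : ℤ) by omega]
    simp only [zpow_natCast, circleIntegral_pow_mul_cexp_mul_eq_zero hr.le, mul_zero]
  have hhigh (m : ℕ) : (t : ℤ) - (m + t : ℕ) - 1 = -(m + 1 : ℤ) := by push_cast; ring
  rw [hlow, sub_zero]
  refine ((hasSum_iteratedDeriv_add_mul_pow_div_factorial hf t 0 z).mul_left (2 * π * I)).congr_fun
    fun m => ?_
  rw [hhigh, circleIntegral_zpow_neg_succ_mul_cexp_mul hr, sub_zero]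
  ring

theorem laplace_transform_representation_general (f : ℂ → ℂ)
    (hf : Differentiable ℂ f) (τ C : ℝ) (hτ : 0 ≤ τ)
    (hbound : ∀ z : ℂ, ‖f z‖ ≤ C * Real.exp (τ * ‖z‖)) :
    (∀ ζ : ℂ, τ < ‖ζ‖ →
      Summable (fun n : ℕ => ‖iteratedDeriv n f 0 * ζ ^ (-(n : ℤ) - 1)‖)) ∧
    (∀ r : ℝ, τ < r → ∀ (t : ℕ) (z : ℂ),
      iteratedDeriv t f z =
        (1 / (2 * π * Complex.I)) *
          ∮ ζ in C(0, r),
            ζ ^ t * Complex.exp (ζ * z) *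
              (∑' n : ℕ, iteratedDeriv n f 0 * ζ ^ (-(n : ℤ) - 1))) := by
  refine ⟨fun ζ hζ => summable_norm_iteratedDeriv_mul_zpow_neg_sub_one hf hbound hτ hζ,
    fun r hr t z => ?_⟩
  have hr0 : 0 < r := hτ.trans_lt hr
  have hsum := summable_norm_iteratedDeriv_mul_zpow_neg_sub_one hf hbound hτ (ζ := r)
    (by rwa [Complex.norm_real, norm_of_nonneg hr0.le])
  rw [(hasSum_circleIntegral_pow_mul_cexp_mul_tsum hr0 hsum t z).unique
    (hasSum_circleIntegral_pow_mul_cexp_mul_iteratedDeriv hf hr0 t z)]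
  field_simp [Complex.two_pi_I_ne_zero]

/-- **Laplace transform representation.** Let `f` be entire with `|f(z)| ≤ C e^{τ|z|}`
and let `F(ζ) = Σ_n f^{(n)}(0) ζ^{−n−1}` be its Laplace transform; the series converges
absolutely for `|ζ| > τ`. Then for every `r > τ`, `t ≥ 0` and `z ∈ ℂ`,
`f^{(t)}(z) = (1/(2πi)) ∮_{|ζ|=r} ζ^t e^{ζz} F(ζ) dζ`. -/
theorem laplace_transform_representation (f : ℂ → ℂ)
    (hf : Differentiable ℂ f) (τ C : ℝ) (hτ : 0 ≤ τ) (hC : 0 < C)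
    (hbound : ∀ z : ℂ, ‖f z‖ ≤ C * Real.exp (τ * ‖z‖)) :
    (∀ ζ : ℂ, τ < ‖ζ‖ →
      Summable (fun n : ℕ => ‖iteratedDeriv n f 0 * ζ ^ (-(n : ℤ) - 1)‖)) ∧
    (∀ r : ℝ, τ < r → ∀ (t : ℕ) (z : ℂ),
      iteratedDeriv t f z =
        (1 / (2 * π * Complex.I)) *
          ∮ ζ in C(0, r),
            ζ ^ t * Complex.exp (ζ * z) *
              (∑' n : ℕ, iteratedDeriv n f 0 * ζ ^ (-(n : ℤ) - 1))) :=
  laplace_transform_representation_general f hf τ C hτ hbound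
end
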